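/- arXiv:2512.21492 — 6 statements merged into one kernel-verified Lean document; each statement's English description precedes it below -/
import Mathlib

section
/- Let 0 < η ≤ ∞, 1 ≤ q < ∞, and let w : (0,∞) → (0,∞) be locally Lipschitz with lim_{t→0+} w(t) = 0. Define φ_w(t) = inf_{t ≤ s ≤ η} w(s) for 0 ≤ t ≤ η. Then for every compactly supported C¹ function u on (0,η), one has ∫₀^η |u'(t)| w(t) dt ≥ ( ∫₀^η |u(t)|^q (d/dt)(φ_w(t)^q) dt )^{1/q}. -/
/-!
Choose `[a, b] ⊆ (0, η)` containing the support of `u` in its interior. On `[a, b]` the running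
infimum `φ` is Lipschitz, nondecreasing and below `w`. With `H x = ∫ₓᵇ |u'| φ`, monotonicity of `φ`
and `u b = 0` give `|u| φ ≤ H`, and the chain rule then gives, almost everywhere on `(a, b)`,
`|u|^q (φ^q)' ≤ ((|u| φ)^q - H^q)'`. The right-hand side is the derivative of an absolutely
continuous function vanishing at `b`, so integrating yields
`∫ |u|^q (φ^q)' ≤ H(a)^q = (∫ |u'| φ)^q ≤ (∫ |u'| w)^q`.
-/

open MeasureTheory Set Filter Topology
open scoped ENNReal NNReal

theorem LipschitzOnWith.comp_absolutelyContinuousOnInterval {X Y : Type*}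
    [PseudoMetricSpace X] [PseudoMetricSpace Y] {h : X → Y} {f : ℝ → X} {s : Set X} {K : ℝ≥0}
    {a b : ℝ} (hh : LipschitzOnWith K h s) (hf : AbsolutelyContinuousOnInterval f a b)
    (hfs : MapsTo f (uIcc a b) s) : AbsolutelyContinuousOnInterval (h ∘ f) a b := by
  rw [absolutelyContinuousOnInterval_iff] at hf ⊢
  intro ε hε
  obtain ⟨δ, hδ, hfδ⟩ := hf (ε / (K + 1)) (by positivity)
  refine ⟨δ, hδ, fun E hE hEδ => ?_⟩
  calc ∑ i ∈ Finset.range E.1, dist (h (f (E.2 i).1)) (h (f (E.2 i).2))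
      ≤ ∑ i ∈ Finset.range E.1, K * dist (f (E.2 i).1) (f (E.2 i).2) :=
        Finset.sum_le_sum fun i hi =>
          hh.dist_le_mul _ (hfs (hE.1 i hi).1) _ (hfs (hE.1 i hi).2)
    _ = K * ∑ i ∈ Finset.range E.1, dist (f (E.2 i).1) (f (E.2 i).2) :=
        (Finset.mul_sum _ _ _).symm
    _ ≤ K * (ε / (K + 1)) := by gcongr; exact (hfδ E hE hEδ).le
    _ < (K + 1) * (ε / (K + 1)) := by gcongr; linarith
    _ = ε := by field_simp

theorem ContDiff.comp_absolutelyContinuousOnInterval {h f : ℝ → ℝ} {a b : ℝ}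
    (hh : ContDiff ℝ 1 h) (hf : AbsolutelyContinuousOnInterval f a b) :
    AbsolutelyContinuousOnInterval (h ∘ f) a b := by
  obtain ⟨C, hC⟩ := hf.exists_bound
  obtain ⟨K, hK⟩ := hh.contDiffOn.exists_lipschitzOnWith one_ne_zero (convex_Icc (-C) C)
    isCompact_Icc
  exact hK.comp_absolutelyContinuousOnInterval hf fun x hx => abs_le.1 (hC x hx)

namespace AbsolutelyContinuousOnInterval

theorem rpow_const {f : ℝ → ℝ} {a b q : ℝ} (hf : AbsolutelyContinuousOnInterval f a b)
    (hq : 1 ≤ q) : AbsolutelyContinuousOnInterval (fun x => f x ^ q) a b :=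
  (Real.contDiff_rpow_const_of_le (n := 1) (by simpa using hq)).comp_absolutelyContinuousOnInterval
    hf

theorem abs {f : ℝ → ℝ} {a b : ℝ} (hf : AbsolutelyContinuousOnInterval f a b) :
    AbsolutelyContinuousOnInterval (fun x => |f x|) a b := by
  simpa only [Function.comp_def, Real.norm_eq_abs] using
    (lipschitzWith_one_norm.lipschitzOnWith (s := univ)).comp_absolutelyContinuousOnInterval hf
      (mapsTo_univ _ _)

end AbsolutelyContinuousOnInterval

theorem abs_rpow_mul_deriv_rpow_le {u φ : ℝ → ℝ} {x q : ℝ} (hq : 1 ≤ q)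
    (hu : DifferentiableAt ℝ u x) (hφ : DifferentiableAt ℝ φ x) (hφ0 : ∀ᶠ y in 𝓝 x, 0 ≤ φ y) :
    |u x| ^ q * deriv (fun y => φ y ^ q) x ≤
      deriv (fun y => (|u y| * φ y) ^ q) x + q * (|u x| * φ x) ^ (q - 1) * (|deriv u x| * φ x) := by
  have hq0 : 0 < q := zero_lt_one.trans_le hq
  have hφx : 0 ≤ φ x := hφ0.self_of_nhds
  have hrem : 0 ≤ q * (|u x| * φ x) ^ (q - 1) * (|deriv u x| * φ x) := by positivity
  rcases eq_or_ne (u x) 0 with hux | hux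
  · have hmin : IsLocalMin (fun y => (|u y| * φ y) ^ q) x := by
      filter_upwards [hφ0] with y hy
      simp only [hux, abs_zero, zero_mul, Real.zero_rpow hq0.ne']
      positivity
    calc |u x| ^ q * deriv (fun y => φ y ^ q) x = 0 := by
          rw [hux, abs_zero, Real.zero_rpow hq0.ne', zero_mul]
      _ ≤ _ := by rw [hmin.deriv_eq_zero, zero_add]; exact hrem
  set s : ℝ := ↑(SignType.sign (u x))
  have habs : HasDerivAt (fun y => |u y|) (s * deriv u x) x :=
    (hasDerivAt_abs hux).comp x hu.hasDerivAt
  rw [((habs.fun_mul hφ.hasDerivAt).rpow_const (Or.inr hq)).deriv,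
    (hφ.hasDerivAt.rpow_const (Or.inr hq)).deriv]
  have hsplit : |u x| ^ q * φ x ^ (q - 1) = (|u x| * φ x) ^ (q - 1) * |u x| := by
    rw [Real.mul_rpow (abs_nonneg _) hφx, Real.rpow_sub_one (abs_ne_zero.2 hux)]
    field_simp
  have hs : -|deriv u x| ≤ s * deriv u x := by
    rcases lt_or_gt_of_ne hux with h | h
    · simpa [s, h] using le_abs_self (deriv u x)
    · simpa [s, h] using neg_abs_le (deriv u x)
  have hcross : 0 ≤ q * (|u x| * φ x) ^ (q - 1) * φ x * (s * deriv u x + |deriv u x|) :=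
    mul_nonneg (by positivity) (by linarith)
  linear_combination (q * deriv φ x) * hsplit + hcross

theorem abs_rpow_mul_deriv_rpow_le_deriv_sub {u φ H : ℝ → ℝ} {x q : ℝ} (hq : 1 ≤ q)
    (hu : DifferentiableAt ℝ u x) (hφ : DifferentiableAt ℝ φ x) (hφ0 : ∀ᶠ y in 𝓝 x, 0 ≤ φ y)
    (hH : HasDerivAt H (-(|deriv u x| * φ x)) x) (hPH : |u x| * φ x ≤ H x)
    (hg : DifferentiableAt ℝ (fun y => (|u y| * φ y) ^ q - H y ^ q) x) :
    |u x| ^ q * deriv (fun y => φ y ^ q) x ≤ deriv (fun y => (|u y| * φ y) ^ q - H y ^ q) x := by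
  have hq0 : 0 < q := zero_lt_one.trans_le hq
  have hφx : 0 ≤ φ x := hφ0.self_of_nhds
  have hP0 : 0 ≤ |u x| * φ x := by positivity
  have hHq := hH.rpow_const (Or.inr hq)
  have hPq : DifferentiableAt ℝ (fun y => (|u y| * φ y) ^ q) x := by
    simpa only [sub_add_cancel] using hg.fun_add hHq.differentiableAt
  rw [deriv_fun_sub hPq hHq.differentiableAt, hHq.deriv]
  have hpow : (|u x| * φ x) ^ (q - 1) ≤ H x ^ (q - 1) := Real.rpow_le_rpow hP0 hPH (by linarith)
  have := mul_le_mul_of_nonneg_left hpow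
    (by positivity : 0 ≤ q * (|deriv u x| * φ x))
  linarith [abs_rpow_mul_deriv_rpow_le hq hu hφ hφ0]

theorem abs_mul_le_integral_abs_deriv_mul {u φ : ℝ → ℝ} {x b : ℝ} (hxb : x ≤ b)
    (hu : AbsolutelyContinuousOnInterval u x b) (hub : u b = 0) (hφ : ContinuousOn φ (Icc x b))
    (hφm : MonotoneOn φ (Icc x b)) (hφx : 0 ≤ φ x) :
    |u x| * φ x ≤ ∫ s in x..b, |deriv u s| * φ s := by
  have hint := hu.intervalIntegrable_deriv.abs
  calc |u x| * φ x = |∫ s in x..b, deriv u s| * φ x := by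
        rw [hu.integral_deriv_eq_sub, hub, zero_sub, abs_neg]
    _ ≤ (∫ s in x..b, |deriv u s|) * φ x := by
        gcongr; exact intervalIntegral.abs_integral_le_integral_abs hxb
    _ = ∫ s in x..b, |deriv u s| * φ x := (intervalIntegral.integral_mul_const _ _).symm
    _ ≤ ∫ s in x..b, |deriv u s| * φ s :=
        intervalIntegral.integral_mono_on hxb (hint.mul_const _)
          (hint.mul_continuousOn (by rwa [uIcc_of_le hxb])) fun s hs =>
            mul_le_mul_of_nonneg_left (hφm ⟨le_rfl, hxb⟩ hs hs.1) (abs_nonneg _)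

theorem integral_le_sub_of_ae_le_deriv {f g : ℝ → ℝ} {a b : ℝ} (hab : a ≤ b)
    (hf : IntervalIntegrable f volume a b) (hg : AbsolutelyContinuousOnInterval g a b)
    (hfg : ∀ᵐ x, x ∈ Ioo a b → f x ≤ deriv g x) :
    ∫ x in a..b, f x ≤ g b - g a := by
  rw [← hg.integral_deriv_eq_sub]
  refine intervalIntegral.integral_mono_ae_restrict hab hf hg.intervalIntegrable_deriv ?_
  rw [Measure.restrict_congr_set Ioo_ae_eq_Icc.symm]
  exact (ae_restrict_iff' measurableSet_Ioo).2 hfg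

theorem integral_abs_rpow_mul_deriv_rpow_le {u φ : ℝ → ℝ} {a b q : ℝ} (hab : a ≤ b)
    (hq : 1 ≤ q) (hu : AbsolutelyContinuousOnInterval u a b) (hub : u b = 0)
    (hφ : AbsolutelyContinuousOnInterval φ a b) (hφm : MonotoneOn φ (Icc a b)) (hφa : 0 ≤ φ a) :
    ∫ x in a..b, |u x| ^ q * deriv (fun s => φ s ^ q) x ≤
      (∫ x in a..b, |deriv u x| * φ x) ^ q := by
  have hq0 : 0 < q := zero_lt_one.trans_le hq
  have hφc : ContinuousOn φ (Icc a b) := uIcc_of_le hab ▸ hφ.continuousOn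
  have hφ0 : ∀ x ∈ Icc a b, 0 ≤ φ x := fun x hx => hφa.trans (hφm ⟨le_rfl, hab⟩ hx hx.1)
  set f := fun x => |deriv u x| * φ x
  have hf : IntervalIntegrable f volume a b :=
    hu.intervalIntegrable_deriv.abs.mul_continuousOn hφ.continuousOn
  set H := fun x => ∫ s in x..b, f s
  have hH : H = fun x => -∫ s in b..x, f s := funext fun x => intervalIntegral.integral_symm _ _
  have hHac : AbsolutelyContinuousOnInterval H a b := by
    rw [hH]; exact (hf.absolutelyContinuousOnInterval_intervalIntegral right_mem_uIcc).fun_neg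
  set g := fun x => (|u x| * φ x) ^ q - H x ^ q
  have hgac : AbsolutelyContinuousOnInterval g a b :=
    ((hu.abs.fun_mul hφ).rpow_const hq).fun_sub (hHac.rpow_const hq)
  have hPH : ∀ x ∈ Icc a b, |u x| * φ x ≤ H x := fun x hx =>
    abs_mul_le_integral_abs_deriv_mul hx.2
      (hu.mono (uIcc_subset_uIcc (by rwa [uIcc_of_le hab]) right_mem_uIcc)) hub
      (hφc.mono (Icc_subset_Icc_left hx.1)) (hφm.mono (Icc_subset_Icc_left hx.1)) (hφ0 x hx)
  have hpt : ∀ᵐ x, x ∈ Ioo a b → |u x| ^ q * deriv (fun s => φ s ^ q) x ≤ deriv g x := by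
    filter_upwards [hu.ae_differentiableAt, hφ.ae_differentiableAt, hgac.ae_differentiableAt,
      hf.ae_hasDerivAt_integral] with x hux hφx hgx hHx hx
    have hx' : x ∈ uIcc a b := uIcc_of_le hab ▸ Ioo_subset_Icc_self hx
    refine abs_rpow_mul_deriv_rpow_le_deriv_sub hq (hux hx') (hφx hx') ?_ ?_
      (hPH x (Ioo_subset_Icc_self hx)) (hgx hx')
    · filter_upwards [Icc_mem_nhds hx.1 hx.2] using hφ0
    · rw [hH]; exact (hHx hx' b right_mem_uIcc).neg
  have hint : IntervalIntegrable (fun x => |u x| ^ q * deriv (fun s => φ s ^ q) x) volume a b :=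
    (hφ.rpow_const hq).intervalIntegrable_deriv.continuousOn_mul
      (hu.abs.rpow_const hq).continuousOn
  calc ∫ x in a..b, |u x| ^ q * deriv (fun s => φ s ^ q) x
      ≤ g b - g a := integral_le_sub_of_ae_le_deriv hab hint hgac hpt
    _ ≤ H a ^ q := by
        have : 0 ≤ (|u a| * φ a) ^ q := by positivity
        simp only [g, H, hub, abs_zero, zero_mul, intervalIntegral.integral_same,
          Real.zero_rpow hq0.ne']
        linarith

theorem integral_abs_rpow_mul_deriv_rpow_nonneg {u φ : ℝ → ℝ} {a b q : ℝ} (hab : a ≤ b)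
    (hq : 0 ≤ q) (hφm : MonotoneOn φ (Icc a b)) (hφa : 0 ≤ φ a) :
    0 ≤ ∫ x in a..b, |u x| ^ q * deriv (fun s => φ s ^ q) x := by
  have hφqm : MonotoneOn (fun s => φ s ^ q) (Icc a b) := fun x hx y hy hxy =>
    Real.rpow_le_rpow (hφa.trans (hφm ⟨le_rfl, hab⟩ hx hx.1)) (hφm hx hy hxy) hq
  refine intervalIntegral.integral_nonneg_of_ae_restrict hab ?_
  rw [Measure.restrict_congr_set Ioo_ae_eq_Icc.symm]
  filter_upwards [ae_restrict_mem measurableSet_Ioo] with x hx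
  rw [Pi.zero_apply, ← derivWithin_of_mem_nhds (Icc_mem_nhds hx.1 hx.2)]
  exact mul_nonneg (by positivity) hφqm.derivWithin_nonneg

theorem IsCompact.exists_subset_Ioo_and_Icc_subset {K S : Set ℝ} (hK : IsCompact K)
    (hne : K.Nonempty) (hS : IsOpen S) (hSc : S.OrdConnected) (hKS : K ⊆ S) :
    ∃ a b, a < b ∧ K ⊆ Ioo a b ∧ Icc a b ⊆ S := by
  obtain ⟨ε, hε, hεS⟩ := Metric.isOpen_iff.1 hS _ (hKS (hK.sInf_mem hne))
  obtain ⟨δ, hδ, hδS⟩ := Metric.isOpen_iff.1 hS _ (hKS (hK.sSup_mem hne))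
  have hKK := csInf_le_csSup hne hK.bddBelow hK.bddAbove
  refine ⟨sInf K - ε / 2, sSup K + δ / 2, by linarith, fun x hx =>
    ⟨by linarith [csInf_le hK.bddBelow hx], by linarith [le_csSup hK.bddAbove hx]⟩,
    hSc.out (hεS ?_) (hδS ?_)⟩ <;>
  · rw [Metric.mem_ball, Real.dist_eq, abs_lt]; constructor <;> linarith

theorem setIntegral_eq_intervalIntegral_of_forall_notMem_Ioo {f : ℝ → ℝ} {S : Set ℝ} {a b : ℝ}
    (hab : a ≤ b) (hS : MeasurableSet S) (habS : Icc a b ⊆ S) (hf : ∀ x ∉ Ioo a b, f x = 0) :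
    ∫ x in S, f x = ∫ x in a..b, f x := by
  rw [intervalIntegral.integral_of_le hab, setIntegral_eq_of_subset_of_forall_sdiff_eq_zero hS
    (Ioc_subset_Icc_self.trans habS) fun x hx => hf x fun h => hx.2 (Ioo_subset_Ioc_self h)]

noncomputable def runningInf (w : ℝ → ℝ) (T : Set ℝ) (t : ℝ) : ℝ :=
  sInf (w '' {s | t ≤ s ∧ s ∈ T})

section runningInf

variable {w : ℝ → ℝ} {T : Set ℝ}

theorem runningInf_le_of_le (hw : BddBelow (w '' T)) {t s : ℝ} (hts : t ≤ s) (hs : s ∈ T) :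
    runningInf w T t ≤ w s :=
  csInf_le (hw.mono (image_mono fun _ hs => hs.2)) ⟨s, ⟨hts, hs⟩, rfl⟩

theorem runningInf_le (hw : BddBelow (w '' T)) {t : ℝ} (ht : t ∈ T) : runningInf w T t ≤ w t :=
  runningInf_le_of_le hw le_rfl ht

theorem runningInf_nonneg (hw : ∀ s ∈ T, 0 ≤ w s) (t : ℝ) : 0 ≤ runningInf w T t :=
  Real.sInf_nonneg (by rintro _ ⟨s, hs, rfl⟩; exact hw s hs.2)

theorem runningInf_monotoneOn (hw : BddBelow (w '' T)) {b : ℝ} (hb : b ∈ T) :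
    MonotoneOn (runningInf w T) (Iic b) := fun _ _ _ ht₂ h =>
  csInf_le_csInf (hw.mono (image_mono fun _ hs => hs.2)) ⟨w b, b, ⟨ht₂, hb⟩, rfl⟩
    (image_mono fun _ hs => ⟨h.trans hs.1, hs.2⟩)

theorem lipschitzOnWith_runningInf {K : ℝ≥0} {a b : ℝ} (hL : LipschitzOnWith K w (Icc a b))
    (hw : BddBelow (w '' T)) (hT : Icc a b ⊆ T) : LipschitzOnWith K (runningInf w T) (Icc a b) := by
  refine LipschitzOnWith.of_le_add_mul K fun x hx y hy => ?_
  have hKd : 0 ≤ K * dist x y := by positivity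
  rcases le_total x y with hxy | hyx
  · linarith [runningInf_monotoneOn hw (hT hy) hxy (le_refl y) hxy]
  have hlower : runningInf w T x - K * dist x y ≤ runningInf w T y := by
    refine le_csInf ⟨w y, y, ⟨le_rfl, hT hy⟩, rfl⟩ ?_
    rintro _ ⟨s, ⟨hys, hs⟩, rfl⟩
    rcases le_total x s with hxs | hsx
    · linarith [runningInf_le_of_le hw hxs hs]
    have hds : dist x s ≤ dist x y := by
      rw [Real.dist_eq, Real.dist_eq, abs_of_nonneg, abs_of_nonneg] <;> linarith
    linarith [hL.le_add_mul hx (⟨hy.1.trans hys, hsx.trans hx.2⟩ : s ∈ Icc a b),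
      runningInf_le hw (hT hx), mul_le_mul_of_nonneg_left hds K.coe_nonneg]
  linarith

end runningInf

theorem integral_abs_rpow_mul_deriv_rpow_rpow_one_div_le {u φ w : ℝ → ℝ} {a b q : ℝ}
    (hab : a ≤ b) (hq : 1 ≤ q) (hu : AbsolutelyContinuousOnInterval u a b) (hub : u b = 0)
    (hφ : AbsolutelyContinuousOnInterval φ a b) (hφm : MonotoneOn φ (Icc a b)) (hφa : 0 ≤ φ a)
    (hφw : ∀ x ∈ Icc a b, φ x ≤ w x)
    (hw : IntervalIntegrable (fun x => |deriv u x| * w x) volume a b) :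
    (∫ x in a..b, |u x| ^ q * deriv (fun s => φ s ^ q) x) ^ (1 / q) ≤
      ∫ x in a..b, |deriv u x| * w x := by
  have hq0 : 0 < q := zero_lt_one.trans_le hq
  have hφ0 : ∀ x ∈ Icc a b, 0 ≤ φ x := fun x hx => hφa.trans (hφm ⟨le_rfl, hab⟩ hx hx.1)
  have hφw' : ∫ x in a..b, |deriv u x| * φ x ≤ ∫ x in a..b, |deriv u x| * w x :=
    intervalIntegral.integral_mono_on hab
      (hu.intervalIntegrable_deriv.abs.mul_continuousOn hφ.continuousOn) hw
      fun x hx => mul_le_mul_of_nonneg_left (hφw x hx) (abs_nonneg _)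
  have hI0 : 0 ≤ ∫ x in a..b, |deriv u x| * φ x :=
    intervalIntegral.integral_nonneg hab fun x hx => mul_nonneg (abs_nonneg _) (hφ0 x hx)
  rw [one_div, Real.rpow_inv_le_iff_of_pos
    (integral_abs_rpow_mul_deriv_rpow_nonneg hab hq0.le hφm hφa) (hI0.trans hφw') hq0]
  calc ∫ x in a..b, |u x| ^ q * deriv (fun s => φ s ^ q) x
      ≤ (∫ x in a..b, |deriv u x| * φ x) ^ q :=
        integral_abs_rpow_mul_deriv_rpow_le hab hq hu hub hφ hφm hφa
    _ ≤ (∫ x in a..b, |deriv u x| * w x) ^ q := by gcongr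

theorem stmt0_general (η : ℝ≥0∞) (q : ℝ) (hq : 1 ≤ q)
    (w : ℝ → ℝ) (hwpos : ∀ t : ℝ, 0 < t → 0 < w t)
    (hwlip : ∀ a b : ℝ, 0 < a → ∃ K : NNReal, LipschitzOnWith K w (Set.Icc a b))
    (φ : ℝ → ℝ)
    (hφ : ∀ t : ℝ, φ t = sInf (w '' {s : ℝ | t ≤ s ∧ 0 < s ∧ ENNReal.ofReal s ≤ η}))
    (u : ℝ → ℝ) (hu : ContDiff ℝ 1 u) (husupp : HasCompactSupport u)
    (husub : tsupport u ⊆ {t : ℝ | 0 < t ∧ ENNReal.ofReal t < η}) :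
    ∫ t in {t : ℝ | 0 < t ∧ ENNReal.ofReal t < η}, |deriv u t| * w t ≥
      (∫ t in {t : ℝ | 0 < t ∧ ENNReal.ofReal t < η},
        |u t| ^ q * deriv (fun s => φ s ^ q) t) ^ (1 / q) := by
  have hq0 : 0 < q := zero_lt_one.trans_le hq
  obtain rfl : φ = runningInf w {s | 0 < s ∧ ENNReal.ofReal s ≤ η} := funext hφ
  rcases (tsupport u).eq_empty_or_nonempty with hK | hK
  · obtain rfl : u = 0 := tsupport_eq_empty_iff.1 hK
    simp [Real.zero_rpow hq0.ne', Real.zero_rpow (inv_pos.2 hq0).ne']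
  set T := {s : ℝ | 0 < s ∧ ENNReal.ofReal s ≤ η}
  have hS : IsOpen {t : ℝ | 0 < t ∧ ENNReal.ofReal t < η} :=
    (isOpen_lt continuous_const continuous_id).inter
      (isOpen_lt ENNReal.continuous_ofReal continuous_const)
  obtain ⟨a, b, hab, hKab, habS⟩ := husupp.exists_subset_Ioo_and_Icc_subset hK hS
    ⟨fun x hx y hy z hz => ⟨hx.1.trans_le hz.1, (ENNReal.ofReal_le_ofReal hz.2).trans_lt hy.2⟩⟩
    husub
  have hT : Icc a b ⊆ T := fun s hs => ⟨(habS hs).1, (habS hs).2.le⟩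
  have hwT : ∀ s ∈ T, 0 ≤ w s := fun s hs => (hwpos s hs.1).le
  have hwbdd : BddBelow (w '' T) := ⟨0, forall_mem_image.2 hwT⟩
  obtain ⟨L, hL⟩ := hwlip a b (habS ⟨le_rfl, hab.le⟩).1
  have hout : ∀ x ∉ Ioo a b, x ∉ tsupport u := fun x hx h => hx (hKab h)
  rw [setIntegral_eq_intervalIntegral_of_forall_notMem_Ioo hab.le hS.measurableSet habS
      fun x hx => by simp [deriv_of_notMem_tsupport (hout x hx)],
    setIntegral_eq_intervalIntegral_of_forall_notMem_Ioo hab.le hS.measurableSet habS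
      fun x hx => by simp [image_eq_zero_of_notMem_tsupport (hout x hx), Real.zero_rpow hq0.ne']]
  exact integral_abs_rpow_mul_deriv_rpow_rpow_one_div_le hab.le hq
    hu.contDiffOn.absolutelyContinuousOnInterval
    (image_eq_zero_of_notMem_tsupport (hout b fun h => h.2.false))
    (LipschitzOnWith.absolutelyContinuousOnInterval
      (by rw [uIcc_of_le hab.le]; exact lipschitzOnWith_runningInf hL hwbdd hT))
    ((runningInf_monotoneOn hwbdd (hT ⟨hab.le, le_rfl⟩)).mono fun _ hx => hx.2)
    (runningInf_nonneg hwT a) (fun x hx => runningInf_le hwbdd (hT hx))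
    (((hu.continuous_deriv le_rfl).abs.continuousOn.mul hL.continuousOn).intervalIntegrable_of_Icc
      hab.le)

theorem stmt0 (η : ℝ≥0∞) (hη : 0 < η) (q : ℝ) (hq : 1 ≤ q)
    (w : ℝ → ℝ) (hwpos : ∀ t : ℝ, 0 < t → 0 < w t)
    (hwlip : ∀ a b : ℝ, 0 < a → ∃ K : NNReal, LipschitzOnWith K w (Set.Icc a b))
    (hw0 : Tendsto w (nhdsWithin 0 (Set.Ioi 0)) (nhds 0))
    (φ : ℝ → ℝ)
    (hφ : ∀ t : ℝ, φ t = sInf (w '' {s : ℝ | t ≤ s ∧ 0 < s ∧ ENNReal.ofReal s ≤ η}))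
    (u : ℝ → ℝ) (hu : ContDiff ℝ 1 u) (husupp : HasCompactSupport u)
    (husub : tsupport u ⊆ {t : ℝ | 0 < t ∧ ENNReal.ofReal t < η}) :
    ∫ t in {t : ℝ | 0 < t ∧ ENNReal.ofReal t < η}, |deriv u t| * w t ≥
      (∫ t in {t : ℝ | 0 < t ∧ ENNReal.ofReal t < η},
        |u t| ^ q * deriv (fun s => φ s ^ q) t) ^ (1 / q) :=
  stmt0_general η q hq w hwpos hwlip φ hφ u hu husupp husub
end

section
/- Let 0 < η ≤ ∞, 1 ≤ q < ∞, and let w : (0,∞) → (0,∞) be locally Lipschitz with lim_{t→0+} w(t) = ∞. Define ψ_w(t) = inf_{0 ≤ s ≤ t} w(s) for 0 < t ≤ η (and ψ_w(t) = inf_{0 ≤ s ≤ η} w(s) for t ≥ η). Then for every compactly supported C¹ function u on (0,η), one has ∫₀^η |u'(t)| w(t) dt ≥ ( ∫₀^η |u(t)|^q (−d/dt)(ψ_w(t)^q) dt )^{1/q}. -/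
/-!
Since `ψ` is antitone and continuous on `(0, ∞)`, the function `-ψ^q` (frozen to the left of some
`ε` below the support of `u`) is a bounded Stieltjes function. Its measure `ν` satisfies
`ν [s, ∞) ≤ ψ(s)^q`, and its absolutely continuous part has density `-(ψ^q)'`, so the right-hand
side is at most `‖u‖_{L^q(ν)}`. As `|u(t)| ≤ ∫_{s ≤ t} |u'(s)| ds`, Minkowski's integral inequality
gives `‖u‖_{L^q(ν)} ≤ ∫ |u'(s)| ν [s, ∞)^{1/q} ds ≤ ∫ |u'| ψ ≤ ∫ |u'| w`.
-/

open MeasureTheory Set Filter Topology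
open scoped ENNReal

section RunningInf

variable {w : ℝ → ℝ}

lemma sInf_image_Ioc_nonneg (hw : ∀ t, 0 < t → 0 ≤ w t) (t : ℝ) :
    0 ≤ sInf (w '' Ioc 0 t) :=
  Real.sInf_nonneg (by rintro _ ⟨s, hs, rfl⟩; exact hw s hs.1)

lemma bddBelow_image_Ioc (hw : ∀ t, 0 < t → 0 ≤ w t) (t : ℝ) : BddBelow (w '' Ioc 0 t) :=
  ⟨0, by rintro _ ⟨s, hs, rfl⟩; exact hw s hs.1⟩

lemma sInf_image_Ioc_le (hw : ∀ t, 0 < t → 0 ≤ w t) {t : ℝ} (ht : 0 < t) :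
    sInf (w '' Ioc 0 t) ≤ w t :=
  csInf_le (bddBelow_image_Ioc hw t) ⟨t, ⟨ht, le_rfl⟩, rfl⟩

lemma antitoneOn_sInf_image_Ioc (hw : ∀ t, 0 < t → 0 ≤ w t) :
    AntitoneOn (fun t => sInf (w '' Ioc 0 t)) (Ioi 0) := fun _ hs _ _ hst =>
  csInf_le_csInf (bddBelow_image_Ioc hw _) ((nonempty_Ioc.2 hs).image _)
    (image_mono (Ioc_subset_Ioc_right hst))

/-- The running infimum inherits the Lipschitz constant of `w`: on `[s₁, s₂]` the function `w`
cannot drop more than `K (s₂ - s₁)` below `w s₁ ≥ ψ s₁`. -/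
lemma lipschitzOnWith_sInf_image_Ioc (hw : ∀ t, 0 < t → 0 ≤ w t) {K : NNReal} {a b : ℝ}
    (ha : 0 < a) (hK : LipschitzOnWith K w (Icc a b)) :
    LipschitzOnWith K (fun t => sInf (w '' Ioc 0 t)) (Icc a b) := by
  have key : ∀ s₁ ∈ Icc a b, ∀ s₂ ∈ Icc a b, s₁ ≤ s₂ →
      sInf (w '' Ioc 0 s₁) - K * (s₂ - s₁) ≤ sInf (w '' Ioc 0 s₂) := by
    intro s₁ hs₁ s₂ hs₂ h12
    refine le_csInf ((nonempty_Ioc.2 (ha.trans_le (hs₁.1.trans h12))).image _) ?_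
    rintro _ ⟨σ, hσ, rfl⟩
    rcases le_or_gt σ s₁ with hσs₁ | hs₁σ
    · have := csInf_le (bddBelow_image_Ioc hw s₁) ⟨σ, ⟨hσ.1, hσs₁⟩, rfl⟩
      nlinarith [K.coe_nonneg]
    · have hw₁ := sInf_image_Ioc_le hw (ha.trans_le hs₁.1)
      have hσab : σ ∈ Icc a b := ⟨hs₁.1.trans hs₁σ.le, hσ.2.trans hs₂.2⟩
      have hd : w s₁ - w σ ≤ K * (σ - s₁) := by
        have := hK.dist_le_mul s₁ hs₁ σ hσab
        rw [Real.dist_eq, Real.dist_eq, abs_sub_comm s₁, abs_of_pos (sub_pos.2 hs₁σ)] at this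
        exact (le_abs_self _).trans this
      have := mul_le_mul_of_nonneg_left (sub_le_sub_right hσ.2 s₁) K.coe_nonneg
      linarith
  refine LipschitzOnWith.of_le_add_mul K fun x hx y hy => ?_
  rcases le_total x y with hxy | hyx
  · have := key x hx y hy hxy
    rw [Real.dist_eq, abs_of_nonpos (by linarith)]
    linarith
  · have := antitoneOn_sInf_image_Ioc hw (ha.trans_le hy.1) (ha.trans_le hx.1) hyx
    nlinarith [K.coe_nonneg, dist_nonneg (x := x) (y := y)]

end RunningInf

lemma continuousOn_Ioi_of_lipschitzOnWith_Icc {f : ℝ → ℝ}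
    (hf : ∀ a b : ℝ, 0 < a → ∃ K : NNReal, LipschitzOnWith K f (Icc a b)) :
    ContinuousOn f (Ioi 0) := fun t ht => by
  obtain ⟨K, hK⟩ := hf (t / 2) (t + 1) (half_pos ht)
  exact (hK.continuousOn.continuousAt
    (Icc_mem_nhds (half_lt_self ht) (lt_add_one t))).continuousWithinAt

/-- `-φ` on `[ε, ∞)`, frozen at `-φ ε` to the left of `ε`, is a bounded continuous Stieltjes
function; `ν` is its measure. -/
theorem exists_isFiniteMeasure_measure_Ici_le {φ : ℝ → ℝ} {ε : ℝ} (hanti : AntitoneOn φ (Ici ε))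
    (hcont : ContinuousOn φ (Ici ε)) (hnonneg : ∀ t ∈ Ici ε, 0 ≤ φ t) :
    ∃ ν : Measure ℝ, IsFiniteMeasure ν ∧ (∀ s ∈ Ici ε, ν (Ici s) ≤ ENNReal.ofReal (φ s)) ∧
      ∀ᵐ t, ε < t → HasDerivAt φ (-(ν.rnDeriv volume t).toReal) t := by
  set g : ℝ → ℝ := fun t => -φ (max t ε)
  have hmax : ∀ t, max t ε ∈ Ici ε := fun t => le_max_right t ε
  have hg_mono : Monotone g := fun s t hst =>
    neg_le_neg (hanti (hmax s) (hmax t) (max_le_max_right ε hst))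
  have hg_cont : Continuous g :=
    (hcont.comp_continuous (continuous_id.max continuous_const) hmax).neg
  have hg_abs : ∀ t, |g t| ≤ φ ε := fun t => by
    rw [abs_neg, abs_of_nonneg (hnonneg _ (hmax t))]
    simpa using hanti (mem_Ici.2 le_rfl) (hmax t) (le_max_right t ε)
  let G : StieltjesFunction ℝ := ⟨g, hg_mono, fun t => hg_cont.continuousWithinAt⟩
  have hg_top : Tendsto g atTop (𝓝 (⨆ t, g t)) :=
    tendsto_atTop_ciSup hg_mono ⟨0, by rintro _ ⟨t, rfl⟩; exact neg_nonpos.2 (hnonneg _ (hmax t))⟩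
  refine ⟨G.measure, G.isFiniteMeasure_of_forall_abs_le hg_abs, fun s hs => ?_, ?_⟩
  · rw [G.measure_Ici hg_top, hg_cont.continuousAt.continuousWithinAt.leftLim_eq]
    refine ENNReal.ofReal_le_ofReal ?_
    have hsup : (⨆ t, g t) ≤ 0 := ciSup_le fun t => neg_nonpos.2 (hnonneg _ (hmax t))
    simp only [g, max_eq_left (mem_Ici.1 hs)]
    linarith
  · filter_upwards [G.ae_hasDerivAt] with t hG hεt
    refine hG.neg.congr_of_eventuallyEq ?_
    filter_upwards [Ioi_mem_nhds hεt] with s hs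
    simp [G, g, max_eq_left (le_of_lt (mem_Ioi.1 hs))]

lemma exists_isFiniteMeasure_of_sInf_image_Ioc_rpow {w : ℝ → ℝ}
    (hw : ∀ t, 0 < t → 0 ≤ w t)
    (hwlip : ∀ a b : ℝ, 0 < a → ∃ K : NNReal, LipschitzOnWith K w (Icc a b))
    {q : ℝ} (hq : 0 < q) {ε : ℝ} (hε : 0 < ε) :
    ∃ ν : Measure ℝ, IsFiniteMeasure ν ∧
      (∀ s ∈ Ici ε, ν (Ici s) ^ (1 / q) ≤ ENNReal.ofReal (w s)) ∧
      ∀ᵐ t, ε < t → HasDerivAt (fun s => sInf (w '' Ioc 0 s) ^ q)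
        (-(ν.rnDeriv volume t).toReal) t := by
  have hpos : Ici ε ⊆ Ioi 0 := fun t ht => hε.trans_le ht
  have hcont : ContinuousOn (fun t => sInf (w '' Ioc 0 t)) (Ioi 0) :=
    continuousOn_Ioi_of_lipschitzOnWith_Icc fun a b ha =>
      (hwlip a b ha).imp fun _ hK => lipschitzOnWith_sInf_image_Ioc hw ha hK
  obtain ⟨ν, hν, hνIci, hνderiv⟩ := exists_isFiniteMeasure_measure_Ici_le
    (φ := fun s => sInf (w '' Ioc 0 s) ^ q) (ε := ε)
    (fun s hs t ht hst => Real.rpow_le_rpow (sInf_image_Ioc_nonneg hw t)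
      (antitoneOn_sInf_image_Ioc hw (hpos hs) (hpos ht) hst) hq.le)
    ((hcont.mono hpos).rpow_const fun _ _ => Or.inr hq.le)
    (fun t _ => Real.rpow_nonneg (sInf_image_Ioc_nonneg hw t) q)
  refine ⟨ν, hν, fun s hs => ?_, hνderiv⟩
  calc ν (Ici s) ^ (1 / q) ≤ ENNReal.ofReal (sInf (w '' Ioc 0 s) ^ q) ^ (1 / q) := by
        gcongr
        exact hνIci s hs
    _ = ENNReal.ofReal (sInf (w '' Ioc 0 s)) := by
        rw [← ENNReal.ofReal_rpow_of_nonneg (sInf_image_Ioc_nonneg hw s) hq.le, one_div,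
          ENNReal.rpow_rpow_inv hq.ne']
    _ ≤ ENNReal.ofReal (w s) := ENNReal.ofReal_le_ofReal (sInf_image_Ioc_le hw (hpos hs))

lemma ENNReal.rpow_one_div_le_of_le_rpow_mul {P L : ℝ≥0∞} {q : ℝ} (hq : 0 < q) (hP : P ≠ ∞)
    (h : P ≤ P ^ (1 - 1 / q) * L) : P ^ (1 / q) ≤ L := by
  rcases eq_or_ne P 0 with rfl | hP0
  · simp [ENNReal.zero_rpow_of_pos (inv_pos.2 hq)]
  have hsplit : P = P ^ (1 - 1 / q) * P ^ (1 / q) := by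
    rw [← ENNReal.rpow_add _ _ hP0 hP, sub_add_cancel, ENNReal.rpow_one]
  refine (ENNReal.mul_le_mul_iff_right (a := P ^ (1 - 1 / q))
    (ENNReal.rpow_pos (pos_iff_ne_zero.2 hP0) hP).ne' (ENNReal.rpow_ne_top_of_ne_zero hP0 hP)).1 ?_
  rwa [← hsplit]

lemma setLIntegral_rpow_sub_one_le {α : Type*} [MeasurableSpace α] (μ : Measure α)
    {f : α → ℝ≥0∞} (hf : AEMeasurable f μ) {q : ℝ} (hq : 1 ≤ q) (A : Set α) :
    ∫⁻ x in A, f x ^ (q - 1) ∂μ ≤ (∫⁻ x, f x ^ q ∂μ) ^ (1 - 1 / q) * μ A ^ (1 / q) := by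
  rcases hq.eq_or_lt with rfl | hq1
  · simp
  have hpq : (q / (q - 1)).HolderConjugate q := (Real.HolderConjugate.conjExponent hq1).symm
  have hH := ENNReal.lintegral_mul_le_Lp_mul_Lq (μ.restrict A) hpq
    ((hf.restrict.pow_const (q - 1))) (aemeasurable_const (b := (1 : ℝ≥0∞)))
  have hexp : ∀ x : ℝ≥0∞, (x ^ (q - 1)) ^ (q / (q - 1)) = x ^ q := fun x => by
    rw [← ENNReal.rpow_mul, mul_div_cancel₀ _ (sub_ne_zero.2 hq1.ne')]
  have hconj : 1 / (q / (q - 1)) = 1 - 1 / q := by field_simp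
  simp only [Pi.mul_apply, mul_one, ENNReal.one_rpow, setLIntegral_one, hexp, hconj] at hH
  exact hH.trans (mul_le_mul_left (ENNReal.rpow_le_rpow (setLIntegral_le_lintegral _ _)
    (by rw [sub_nonneg, div_le_one (by linarith)]; exact hq)) _)

lemma lintegral_lintegral_Iic_mul {ν : Measure ℝ} [SFinite ν] {h g : ℝ → ℝ≥0∞}
    (hh : Measurable h) (hg : Measurable g) :
    ∫⁻ t, (∫⁻ s in Iic t, h s) * g t ∂ν = ∫⁻ s, h s * ∫⁻ t in Ici s, g t ∂ν := by
  have hind : ∀ s t : ℝ, (Iic t).indicator h s * g t = (Ici s).indicator (fun t => h s * g t) t :=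
    fun s t => by by_cases hst : s ≤ t <;> simp [hst]
  calc ∫⁻ t, (∫⁻ s in Iic t, h s) * g t ∂ν
      = ∫⁻ t, ∫⁻ s, (Iic t).indicator h s * g t ∂volume ∂ν := by
        simp_rw [← lintegral_indicator measurableSet_Iic,
          lintegral_mul_const _ (hh.indicator measurableSet_Iic)]
    _ = ∫⁻ s, ∫⁻ t, (Iic t).indicator h s * g t ∂ν ∂volume := by
        refine lintegral_lintegral_swap (Measurable.aemeasurable ?_)
        have : Function.uncurry (fun t s => (Iic t).indicator h s * g t) =
            fun p : ℝ × ℝ => {p : ℝ × ℝ | p.2 ≤ p.1}.indicator (fun p => h p.2) p * g p.1 := by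
          ext ⟨t, s⟩
          by_cases hst : s ≤ t <;> simp [hst]
        rw [this]
        exact ((hh.comp measurable_snd).indicator
          (measurableSet_le measurable_snd measurable_fst)).mul (hg.comp measurable_fst)
    _ = ∫⁻ s, h s * ∫⁻ t in Ici s, g t ∂ν := by
        simp_rw [hind, lintegral_indicator measurableSet_Ici, lintegral_const_mul _ hg]

/-- Minkowski's integral inequality for `F t = ∫_{s ≤ t} h s` in `L^q(ν)`, via the Hölder splitting
`F^q = F ⋅ F^(q-1)`. -/
theorem lintegral_lintegral_Iic_rpow_le {ν : Measure ℝ} [IsFiniteMeasure ν] {h : ℝ → ℝ≥0∞}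
    (hh : Measurable h) (hfin : ∫⁻ s, h s ≠ ∞) {q : ℝ} (hq : 1 ≤ q) :
    (∫⁻ t, (∫⁻ s in Iic t, h s) ^ q ∂ν) ^ (1 / q) ≤ ∫⁻ s, h s * ν (Ici s) ^ (1 / q) := by
  set F : ℝ → ℝ≥0∞ := fun t => ∫⁻ s in Iic t, h s
  have hF : Measurable F :=
    Monotone.measurable fun _ _ hst => lintegral_mono_set (Iic_subset_Iic.2 hst)
  set P := ∫⁻ t, F t ^ q ∂ν
  have hP : P ≠ ∞ := by
    refine ne_top_of_le_ne_top (b := ∫⁻ _, (∫⁻ s, h s) ^ q ∂ν) ?_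
      (lintegral_mono fun t => ENNReal.rpow_le_rpow (setLIntegral_le_lintegral _ _) (by linarith))
    rw [lintegral_const]
    exact ENNReal.mul_ne_top (ENNReal.rpow_ne_top_of_nonneg (by linarith) hfin) (measure_ne_top _ _)
  refine ENNReal.rpow_one_div_le_of_le_rpow_mul (by linarith) hP ?_
  calc P = ∫⁻ t, F t * F t ^ (q - 1) ∂ν := by
        refine lintegral_congr fun t => ?_
        have := ENNReal.rpow_add_of_nonneg (x := F t) 1 (q - 1) zero_le_one (sub_nonneg.2 hq)
        rwa [add_sub_cancel, ENNReal.rpow_one] at this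
    _ = ∫⁻ s, h s * ∫⁻ t in Ici s, F t ^ (q - 1) ∂ν := lintegral_lintegral_Iic_mul hh (hF.pow_const _)
    _ ≤ ∫⁻ s, h s * (P ^ (1 - 1 / q) * ν (Ici s) ^ (1 / q)) := by
        gcongr with s
        exact setLIntegral_rpow_sub_one_le ν hF.aemeasurable hq _
    _ = P ^ (1 - 1 / q) * ∫⁻ s, h s * ν (Ici s) ^ (1 / q) := by
        rw [← lintegral_const_mul' _ _ (ENNReal.rpow_ne_top_of_nonneg
          (sub_nonneg.2 (div_le_one_of_le₀ hq (by linarith))) hP)]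
        exact lintegral_congr fun s => by ring

lemma exists_pos_forall_lt_of_isCompact_subset_Ioi {K : Set ℝ} (hK : IsCompact K)
    (hK0 : K ⊆ Ioi 0) : ∃ ε, 0 < ε ∧ ∀ t ∈ K, ε < t := by
  obtain ⟨δ, hδ, hδK⟩ := hK.exists_forall_le' continuousOn_id hK0
  exact ⟨δ / 2, half_pos hδ, fun t ht => (half_lt_self hδ).trans_le (hδK t ht)⟩

section CompactlySupported

variable {u : ℝ → ℝ}

lemma enorm_le_lintegral_Iic_enorm_deriv (hu : ContDiff ℝ 1 u) (hc : HasCompactSupport u)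
    (t : ℝ) : ‖u t‖ₑ ≤ ∫⁻ s in Iic t, ‖deriv u s‖ₑ := by
  have hftc := integral_Iic_of_hasDerivAt_of_tendsto hu.continuous.continuousWithinAt
    (fun x _ => (hu.differentiable one_ne_zero x).hasDerivAt)
    ((hu.continuous_deriv le_rfl).integrable_of_hasCompactSupport hc.deriv).integrableOn
    (hc.is_zero_at_infty.mono_left atBot_le_cocompact) (a := t)
  rw [sub_zero] at hftc
  exact hftc ▸ enorm_integral_le_lintegral_enorm _

lemma deriv_eq_zero_of_notMem_tsupport {t : ℝ} (ht : t ∉ tsupport u) : deriv u t = 0 :=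
  Function.notMem_support.1 fun h => ht (support_deriv_subset h)

lemma ofReal_setIntegral_abs_deriv_mul (hu : ContDiff ℝ 1 u) (hc : HasCompactSupport u)
    {w : ℝ → ℝ} {S : Set ℝ} (hS : MeasurableSet S) (huS : tsupport u ⊆ S)
    (hw : ContinuousOn w S) (hw0 : ∀ t ∈ S, 0 ≤ w t) :
    ENNReal.ofReal (∫ t in S, |deriv u t| * w t) = ∫⁻ t, ‖deriv u t‖ₑ * ENNReal.ofReal (w t) := by
  have hint : Integrable (fun t => |deriv u t| * w t) :=
    (((hu.continuous_deriv le_rfl).abs.continuousOn.mul (hw.mono huS)).integrableOn_compact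
      hc).integrable_of_forall_notMem_eq_zero fun t ht => by
        simp [deriv_eq_zero_of_notMem_tsupport ht]
  rw [ofReal_integral_eq_lintegral_ofReal hint.integrableOn
    (ae_restrict_of_forall_mem hS fun t ht => mul_nonneg (abs_nonneg _) (hw0 t ht))]
  refine (setLIntegral_congr_fun hS fun t _ => ?_).trans (setLIntegral_eq_of_support_subset ?_)
  · rw [ENNReal.ofReal_mul (abs_nonneg _), Real.enorm_eq_ofReal_abs]
  · intro t ht
    by_contra htS
    simp [deriv_eq_zero_of_notMem_tsupport fun h => htS (huS h)] at ht

end CompactlySupported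

lemma mul_neg_deriv_ae_eq {ν : Measure ℝ} {φ v : ℝ → ℝ} {ε : ℝ} (hv0 : ∀ t ≤ ε, v t = 0)
    (hφ : ∀ᵐ t, ε < t → HasDerivAt φ (-(ν.rnDeriv volume t).toReal) t) :
    ∀ᵐ t, v t * -deriv φ t = v t * (ν.rnDeriv volume t).toReal := by
  filter_upwards [hφ] with t ht
  rcases le_or_gt t ε with htε | hεt
  · simp [hv0 t htε]
  · rw [(ht hεt).deriv, neg_neg]

lemma ofReal_setIntegral_le_lintegral_of_ae_eq_mul_rnDeriv {ν : Measure ℝ} {f v : ℝ → ℝ}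
    (hv : Measurable v) (hf : ∀ᵐ t, v t * f t = v t * (ν.rnDeriv volume t).toReal)
    (S : Set ℝ) : ENNReal.ofReal (∫ t in S, v t * f t) ≤ ∫⁻ t, ‖v t‖ₑ ∂ν := by
  have hpt : ∀ᵐ t, ‖v t * f t‖ₑ ≤ ‖v t‖ₑ * ν.rnDeriv volume t := by
    filter_upwards [hf] with t ht
    rw [ht, enorm_mul, Real.enorm_eq_ofReal ENNReal.toReal_nonneg]
    gcongr
    exact ENNReal.ofReal_toReal_le
  calc ENNReal.ofReal (∫ t in S, v t * f t)
      ≤ ∫⁻ t in S, ‖v t * f t‖ₑ :=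
        (Real.ofReal_le_enorm _).trans (enorm_integral_le_lintegral_enorm _)
    _ ≤ ∫⁻ t, ‖v t‖ₑ * ν.rnDeriv volume t :=
        (setLIntegral_le_lintegral _ _).trans (lintegral_mono_ae hpt)
    _ = ∫⁻ t, ‖v t‖ₑ ∂(volume.withDensity (ν.rnDeriv volume)) := by
        rw [lintegral_withDensity_eq_lintegral_mul _ (Measure.measurable_rnDeriv _ _) hv.enorm]
        simp_rw [Pi.mul_apply, mul_comm]
    _ ≤ ∫⁻ t, ‖v t‖ₑ ∂ν := lintegral_mono' (Measure.withDensity_rnDeriv_le _ _) le_rfl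

lemma ofReal_setIntegral_rpow_mul_neg_deriv_le {ν : Measure ℝ} {φ u : ℝ → ℝ} {ε q : ℝ}
    (hq : 0 < q) (hu : Measurable u) (hu0 : ∀ t ≤ ε, u t = 0)
    (hφ : ∀ᵐ t, ε < t → HasDerivAt φ (-(ν.rnDeriv volume t).toReal) t) (S : Set ℝ) :
    ENNReal.ofReal ((∫ t in S, |u t| ^ q * -deriv φ t) ^ (1 / q)) ≤
      (∫⁻ t, ‖u t‖ₑ ^ q ∂ν) ^ (1 / q) := by
  have hae := mul_neg_deriv_ae_eq (v := fun t => |u t| ^ q)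
    (fun t ht => by simp [hu0 t ht, hq.ne']) hφ
  have hnonneg : 0 ≤ ∫ t in S, |u t| ^ q * -deriv φ t :=
    integral_nonneg_of_ae <| by
      filter_upwards [ae_restrict_of_ae hae] with t ht
      rw [ht]
      positivity
  rw [← ENNReal.ofReal_rpow_of_nonneg hnonneg (by positivity)]
  gcongr
  simpa only [Real.enorm_rpow_of_nonneg (abs_nonneg _) hq.le, Real.enorm_abs] using
    ofReal_setIntegral_le_lintegral_of_ae_eq_mul_rnDeriv
      (hu.abs.pow_const q) hae S

theorem stmt1_general (η : ℝ≥0∞) (q : ℝ) (hq : 1 ≤ q)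
    (w : ℝ → ℝ) (hwpos : ∀ t : ℝ, 0 < t → 0 < w t)
    (hwlip : ∀ a b : ℝ, 0 < a → ∃ K : NNReal, LipschitzOnWith K w (Set.Icc a b))
    (ψ : ℝ → ℝ)
    (hψ : ∀ t : ℝ, ψ t = sInf (w '' Set.Ioc 0 t))
    (u : ℝ → ℝ) (hu : ContDiff ℝ 1 u) (husupp : HasCompactSupport u)
    (husub : tsupport u ⊆ {t : ℝ | 0 < t ∧ ENNReal.ofReal t < η}) :
    ∫ t in {t : ℝ | 0 < t ∧ ENNReal.ofReal t < η}, |deriv u t| * w t ≥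
      (∫ t in {t : ℝ | 0 < t ∧ ENNReal.ofReal t < η},
        |u t| ^ q * (-(deriv (fun s => ψ s ^ q) t))) ^ (1 / q) := by
  obtain rfl : ψ = fun t => sInf (w '' Ioc 0 t) := funext hψ
  have hq0 : 0 < q := by linarith
  have hw : ∀ t, 0 < t → 0 ≤ w t := fun t ht => (hwpos t ht).le
  set S := {t : ℝ | 0 < t ∧ ENNReal.ofReal t < η}
  have hS : MeasurableSet S :=
    measurableSet_Ioi.inter (measurableSet_lt ENNReal.measurable_ofReal measurable_const)
  obtain ⟨ε, hε, hεu⟩ :=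
    exists_pos_forall_lt_of_isCompact_subset_Ioi husupp fun t ht => (husub ht).1
  obtain ⟨ν, hν, hνw, hνderiv⟩ :=
    exists_isFiniteMeasure_of_sInf_image_Ioc_rpow hw hwlip hq0 hε
  have hu' := hu.continuous_deriv le_rfl
  rw [ge_iff_le, ← ENNReal.ofReal_le_ofReal_iff
      (setIntegral_nonneg hS fun t ht => mul_nonneg (abs_nonneg _) (hw t ht.1)),
    ofReal_setIntegral_abs_deriv_mul hu husupp hS husub
      ((continuousOn_Ioi_of_lipschitzOnWith_Icc hwlip).mono fun t ht => ht.1) fun t ht => hw t ht.1]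
  calc _ ≤ (∫⁻ t, ‖u t‖ₑ ^ q ∂ν) ^ (1 / q) :=
        ofReal_setIntegral_rpow_mul_neg_deriv_le hq0 hu.continuous.measurable
          (fun t ht => image_eq_zero_of_notMem_tsupport fun h => (hεu t h).not_ge ht) hνderiv S
    _ ≤ (∫⁻ t, (∫⁻ s in Iic t, ‖deriv u s‖ₑ) ^ q ∂ν) ^ (1 / q) := by
        gcongr with t
        exact enorm_le_lintegral_Iic_enorm_deriv hu husupp t
    _ ≤ ∫⁻ s, ‖deriv u s‖ₑ * ν (Ici s) ^ (1 / q) :=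
        lintegral_lintegral_Iic_rpow_le hu'.measurable.enorm
          (hu'.integrable_of_hasCompactSupport husupp.deriv).2.ne hq
    _ ≤ ∫⁻ s, ‖deriv u s‖ₑ * ENNReal.ofReal (w s) := lintegral_mono fun s => by
        by_cases hs : s ∈ tsupport u
        · gcongr
          exact hνw s (hεu s hs).le
        · simp [deriv_eq_zero_of_notMem_tsupport hs]

theorem stmt1 (η : ℝ≥0∞) (hη : 0 < η) (q : ℝ) (hq : 1 ≤ q)
    (w : ℝ → ℝ) (hwpos : ∀ t : ℝ, 0 < t → 0 < w t)
    (hwlip : ∀ a b : ℝ, 0 < a → ∃ K : NNReal, LipschitzOnWith K w (Set.Icc a b))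
    (hw0 : Tendsto w (nhdsWithin 0 (Set.Ioi 0)) atTop)
    (ψ : ℝ → ℝ)
    (hψ : ∀ t : ℝ, ψ t = sInf (w '' Set.Ioc 0 t))
    (u : ℝ → ℝ) (hu : ContDiff ℝ 1 u) (husupp : HasCompactSupport u)
    (husub : tsupport u ⊆ {t : ℝ | 0 < t ∧ ENNReal.ofReal t < η}) :
    ∫ t in {t : ℝ | 0 < t ∧ ENNReal.ofReal t < η}, |deriv u t| * w t ≥
      (∫ t in {t : ℝ | 0 < t ∧ ENNReal.ofReal t < η},
        |u t| ^ q * (-(deriv (fun s => ψ s ^ q) t))) ^ (1 / q) :=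
  stmt1_general η q hq w hwpos hwlip ψ hψ u hu husupp husub
end

section
/- Let v : (0,η] → (0,∞) be locally Lipschitz, nondecreasing, with lim_{r→0+} v(r) = 0, and suppose there is C₀ > 0 such that v(r)/(r v'(r)) ≥ C₀ at every r ∈ (0,η] where v is differentiable with v'(r) ≠ 0. Then v(r) ≥ v(η) (r/η)^{1/C₀} for all r ∈ (0,η]. -/
/-!
The weighted function `ψ x = v x * x ^ (-1 / C₀)` is absolutely continuous on `[r, η]`, as the
product of a Lipschitz function and a smooth one. Wherever `ψ` is differentiable so is `v`, and
`ψ' x = x ^ (-1 / C₀ - 1) * (x * v' x - v x / C₀)`. The non-degeneracy condition says precisely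
that `x * v' x ≤ v x / C₀` (trivially so where `v' x ≤ 0`), hence `ψ' ≤ 0` and the fundamental
theorem of calculus for absolutely continuous functions gives `ψ η ≤ ψ r`.
-/

open Set Filter Topology

theorem AbsolutelyContinuousOnInterval.le_of_hasDerivAt_nonpos {f : ℝ → ℝ} {a b : ℝ}
    (hf : AbsolutelyContinuousOnInterval f a b) (hab : a ≤ b)
    (hf' : ∀ x ∈ Ioo a b, ∀ d, HasDerivAt f d x → d ≤ 0) : f b ≤ f a := by
  have hderiv : ∀ x ∈ Ioo a b, deriv f x ≤ (fun _ => (0 : ℝ)) x := fun x hx => by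
    by_cases hfx : DifferentiableAt ℝ f x
    · exact hf' x hx _ hfx.hasDerivAt
    · exact (deriv_zero_of_not_differentiableAt hfx).le
  have hint := intervalIntegral.integral_mono_on_of_le_Ioo hab hf.intervalIntegrable_deriv
    intervalIntegrable_const hderiv
  rw [hf.integral_deriv_eq_sub, intervalIntegral.integral_zero] at hint
  linarith

namespace Real

variable {v : ℝ → ℝ} {c x : ℝ}

theorem hasDerivAt_mul_rpow_neg (hx : 0 < x) {v' : ℝ} (hv : HasDerivAt v v' x) :
    HasDerivAt (fun y => v y * y ^ (-c)) (x ^ (-c - 1) * (x * v' - c * v x)) x := by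
  refine (hv.mul (hasDerivAt_rpow_const (p := -c) (Or.inl hx.ne'))).congr_deriv ?_
  rw [rpow_sub_one hx.ne']
  field_simp
  ring

theorem differentiableAt_of_mul_rpow_neg (hx : 0 < x)
    (h : DifferentiableAt ℝ (fun y => v y * y ^ (-c)) x) : DifferentiableAt ℝ v x := by
  have hv : (fun y => v y * y ^ (-c) * y ^ c) =ᶠ[𝓝 x] v := by
    filter_upwards [lt_mem_nhds hx] with y hy
    rw [mul_assoc, ← rpow_add hy, neg_add_cancel, rpow_zero, mul_one]
  exact (h.mul (differentiableAt_rpow_const_of_ne c hx.ne')).congr_of_eventuallyEq hv.symm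

theorem mul_rpow_neg_le_of_mul_hasDerivAt_le {a b : ℝ} (ha : 0 < a) (hab : a ≤ b)
    (hv : AbsolutelyContinuousOnInterval v a b)
    (hv' : ∀ x ∈ Ioo a b, ∀ d, HasDerivAt v d x → x * d ≤ c * v x) :
    v b * b ^ (-c) ≤ v a * a ^ (-c) := by
  have hpow : AbsolutelyContinuousOnInterval (fun y : ℝ => y ^ (-c)) a b := by
    refine ContDiffOn.absolutelyContinuousOnInterval fun y hy => ?_
    rw [uIcc_of_le hab] at hy
    exact (contDiffAt_rpow_const_of_ne (ha.trans_le hy.1).ne').contDiffWithinAt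
  refine (hv.mul hpow).le_of_hasDerivAt_nonpos hab fun x hx d hd => ?_
  replace hd : HasDerivAt (fun y => v y * y ^ (-c)) d x := hd
  have hx0 : 0 < x := ha.trans hx.1
  have hvx := (differentiableAt_of_mul_rpow_neg hx0 hd.differentiableAt).hasDerivAt
  rw [← (hasDerivAt_mul_rpow_neg hx0 hvx).unique hd]
  exact mul_nonpos_of_nonneg_of_nonpos (rpow_nonneg hx0.le _) (sub_nonpos.2 (hv' x hx _ hvx))

end Real

theorem stmt10_general (η : ℝ)
    (v : ℝ → ℝ)
    (hvlip : ∀ a : ℝ, 0 < a → a ≤ η → ∃ K : NNReal, LipschitzOnWith K v (Set.Icc a η))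
    (hvpos : ∀ r ∈ Set.Ioc (0:ℝ) η, 0 < v r)
    (C₀ : ℝ) (hC₀ : 0 < C₀)
    (hNDC : ∀ r ∈ Set.Ioc (0:ℝ) η, ∀ d : ℝ, d ≠ 0 → HasDerivAt v d r →
      C₀ ≤ v r / (r * d)) :
    ∀ r ∈ Set.Ioc (0:ℝ) η, v η * (r / η) ^ (1 / C₀) ≤ v r := by
  rintro r ⟨hr, hrη⟩
  obtain ⟨K, hK⟩ := hvlip r hr hrη
  have hv_ac : AbsolutelyContinuousOnInterval v r η :=
    LipschitzOnWith.absolutelyContinuousOnInterval (K := K) (by rwa [uIcc_of_le hrη])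
  have hv' : ∀ x ∈ Ioo r η, ∀ d, HasDerivAt v d x → x * d ≤ 1 / C₀ * v x := by
    intro x hx d hd
    have hx0 : 0 < x := hr.trans hx.1
    have hvx : 0 < v x := hvpos x ⟨hx0, hx.2.le⟩
    rcases le_or_gt d 0 with hd0 | hd0
    · calc x * d ≤ 0 := mul_nonpos_of_nonneg_of_nonpos hx0.le hd0
        _ ≤ 1 / C₀ * v x := by positivity
    · have h := hNDC x ⟨hx0, hx.2.le⟩ d hd0.ne' hd
      rw [le_div_iff₀ (by positivity)] at h
      rw [one_div_mul_eq_div, le_div_iff₀ hC₀]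
      linarith
  have key := Real.mul_rpow_neg_le_of_mul_hasDerivAt_le hr hrη hv_ac hv'
  have hη : 0 < η := hr.trans_le hrη
  calc v η * (r / η) ^ (1 / C₀) = v η * η ^ (-(1 / C₀)) * r ^ (1 / C₀) := by
        rw [Real.div_rpow hr.le hη.le, Real.rpow_neg hη.le]; ring
    _ ≤ v r * r ^ (-(1 / C₀)) * r ^ (1 / C₀) := by gcongr
    _ = v r := by rw [mul_assoc, ← Real.rpow_add hr, neg_add_cancel, Real.rpow_zero, mul_one]

theorem stmt10 (η : ℝ) (hη : 0 < η)
    (v : ℝ → ℝ)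
    (hvlip : ∀ a : ℝ, 0 < a → a ≤ η → ∃ K : NNReal, LipschitzOnWith K v (Set.Icc a η))
    (hvmono : MonotoneOn v (Set.Ioc 0 η))
    (hvpos : ∀ r ∈ Set.Ioc (0:ℝ) η, 0 < v r)
    (hv0 : Tendsto v (nhdsWithin 0 (Set.Ioi 0)) (nhds 0))
    (C₀ : ℝ) (hC₀ : 0 < C₀)
    (hNDC : ∀ r ∈ Set.Ioc (0:ℝ) η, ∀ d : ℝ, d ≠ 0 → HasDerivAt v d r →
      C₀ ≤ v r / (r * d)) :
    ∀ r ∈ Set.Ioc (0:ℝ) η, v η * (r / η) ^ (1 / C₀) ≤ v r :=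
  stmt10_general η v hvlip hvpos C₀ hC₀ hNDC
end

section
/- Let v : (0,η] → (0,∞) be locally Lipschitz, nonincreasing, with lim_{r→0+} v(r) = ∞, and suppose there is C₀ > 0 such that −v(r)/(r v'(r)) ≥ C₀ at every r ∈ (0,η] where v is differentiable with v'(r) ≠ 0. Then v(r) ≤ v(η) (r/η)^{−1/C₀} for all r ∈ (0,η]. -/
/-!
On `[r, η]` the function `x ↦ v x * x ^ (1 / C₀)` is Lipschitz, hence absolutely continuous. Wherever
`v` has a derivative `d`, its derivative is `x ^ (1 / C₀ - 1) * (x * d + v x / C₀)`, which is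
nonnegative: for `d < 0` this is the non-degeneracy condition, and `d > 0` is excluded by it because
`v > 0`. As `v` is differentiable almost everywhere, the fundamental theorem of calculus for
absolutely continuous functions makes the function nondecreasing, and comparing its values at `r`
and `η` gives the bound.
-/

open MeasureTheory Set Filter Topology

theorem AbsolutelyContinuousOnInterval.le_of_ae_deriv_nonneg {f : ℝ → ℝ} {a b : ℝ}
    (hab : a ≤ b) (hf : AbsolutelyContinuousOnInterval f a b)
    (hf' : ∀ᵐ x, x ∈ Icc a b → 0 ≤ deriv f x) : f a ≤ f b := by
  have hint : 0 ≤ ∫ x in a..b, deriv f x :=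
    intervalIntegral.integral_nonneg_of_ae_restrict hab
      ((ae_restrict_iff' measurableSet_Icc).2 hf')
  linarith [hf.integral_deriv_eq_sub]

theorem HasDerivAt.mul_rpow_const {v : ℝ → ℝ} {d x : ℝ} (p : ℝ) (hx : 0 < x)
    (hv : HasDerivAt v d x) :
    HasDerivAt (fun y ↦ v y * y ^ p) (x ^ p / x * (x * d + p * v x)) x := by
  refine (hv.mul (Real.hasDerivAt_rpow_const (p := p) (Or.inl hx.ne'))).congr_deriv ?_
  rw [Real.rpow_sub_one hx.ne']
  field_simp

theorem mul_add_one_div_mul_nonneg_of_le_neg_div {C₀ x y d : ℝ} (hC₀ : 0 < C₀) (hx : 0 < x)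
    (hy : 0 < y) (h : d ≠ 0 → C₀ ≤ -y / (x * d)) : 0 ≤ x * d + 1 / C₀ * y := by
  rcases lt_trichotomy d 0 with hd | rfl | hd
  · have hCxd := (le_div_iff_of_neg (mul_neg_of_pos_of_neg hx hd)).1 (h hd.ne)
    have : -(x * d) ≤ 1 / C₀ * y := by
      rw [one_div_mul_eq_div, le_div_iff₀ hC₀]
      linarith
    linarith
  · positivity
  · have := h hd.ne'
    have : -y / (x * d) < 0 := div_neg_of_neg_of_pos (neg_neg_of_pos hy) (by positivity)
    linarith

theorem mul_rpow_le_of_nondegenerate {v : ℝ → ℝ} {a b C₀ : ℝ} {K : NNReal}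
    (ha : 0 < a) (hab : a ≤ b) (hv : LipschitzOnWith K v (Icc a b)) (hC₀ : 0 < C₀)
    (hpos : ∀ x ∈ Icc a b, 0 < v x)
    (hNDC : ∀ x ∈ Icc a b, ∀ d : ℝ, d ≠ 0 → HasDerivAt v d x → C₀ ≤ -(v x) / (x * d)) :
    v a * a ^ (1 / C₀) ≤ v b * b ^ (1 / C₀) := by
  rw [← uIcc_of_le hab] at hv
  have hvac := hv.absolutelyContinuousOnInterval
  have hrpow : AbsolutelyContinuousOnInterval (fun y : ℝ ↦ y ^ (1 / C₀)) a b := by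
    refine ContDiffOn.absolutelyContinuousOnInterval ?_
    rw [uIcc_of_le hab]
    exact fun x hx ↦ (Real.contDiffAt_rpow_const_of_ne (ha.trans_le hx.1).ne').contDiffWithinAt
  refine (hvac.fun_mul hrpow).le_of_ae_deriv_nonneg hab ?_
  filter_upwards [hvac.ae_differentiableAt] with x hdiff hx
  rw [uIcc_of_le hab] at hdiff
  have hx0 : 0 < x := ha.trans_le hx.1
  have hderiv := (hdiff hx).hasDerivAt
  rw [(hderiv.mul_rpow_const (1 / C₀) hx0).deriv]
  exact mul_nonneg (by positivity) <| mul_add_one_div_mul_nonneg_of_le_neg_div hC₀ hx0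
    (hpos x hx) fun hd ↦ hNDC x hx _ hd hderiv

theorem stmt11_general (η : ℝ)
    (v : ℝ → ℝ)
    (hvlip : ∀ a : ℝ, 0 < a → a ≤ η → ∃ K : NNReal, LipschitzOnWith K v (Set.Icc a η))
    (hvpos : ∀ r ∈ Set.Ioc (0:ℝ) η, 0 < v r)
    (C₀ : ℝ) (hC₀ : 0 < C₀)
    (hNDC : ∀ r ∈ Set.Ioc (0:ℝ) η, ∀ d : ℝ, d ≠ 0 → HasDerivAt v d r →
      C₀ ≤ -(v r) / (r * d)) :
    ∀ r ∈ Set.Ioc (0:ℝ) η, v r ≤ v η * (r / η) ^ (-(1 / C₀)) := by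
  rintro r ⟨hr, hrη⟩
  have hη : 0 < η := hr.trans_le hrη
  obtain ⟨K, hK⟩ := hvlip r hr hrη
  have hsub : Icc r η ⊆ Ioc 0 η := (Icc_subset_Ioc_iff hrη).2 ⟨hr, le_rfl⟩
  have hmono := mul_rpow_le_of_nondegenerate hr hrη hK hC₀ (fun x hx ↦ hvpos x (hsub hx))
    fun x hx ↦ hNDC x (hsub hx)
  rw [Real.rpow_neg (div_nonneg hr.le hη.le), Real.div_rpow hr.le hη.le, inv_div,
    ← mul_div_assoc, le_div_iff₀ (by positivity)]
  exact hmono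

theorem stmt11 (η : ℝ) (hη : 0 < η)
    (v : ℝ → ℝ)
    (hvlip : ∀ a : ℝ, 0 < a → a ≤ η → ∃ K : NNReal, LipschitzOnWith K v (Set.Icc a η))
    (hvanti : AntitoneOn v (Set.Ioc 0 η))
    (hvpos : ∀ r ∈ Set.Ioc (0:ℝ) η, 0 < v r)
    (hv0 : Tendsto v (nhdsWithin 0 (Set.Ioi 0)) atTop)
    (C₀ : ℝ) (hC₀ : 0 < C₀)
    (hNDC : ∀ r ∈ Set.Ioc (0:ℝ) η, ∀ d : ℝ, d ≠ 0 → HasDerivAt v d r →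
      C₀ ≤ -(v r) / (r * d)) :
    ∀ r ∈ Set.Ioc (0:ℝ) η, v r ≤ v η * (r / η) ^ (-(1 / C₀)) :=
  stmt11_general η v hvlip hvpos C₀ hC₀ hNDC
end

section
/- Let w : (0,∞) → (0,∞) be Lipschitz with lim_{t→0+} w(t) = 0, and suppose w vanishes in infinite order at the origin (there exist C > 0 and r_m → 0+ with w(r_m) ≤ C r_m^m for every m ∈ ℕ). Then the non-degenerate condition fails: for every η > 0, inf { |w(r)/(r w'(r))| : r ∈ (0,η] ∩ Z[φ_w] } = 0, where φ_w is the largest nondecreasing minorant of w on [0,η] and Z[φ_w] is the set of points where φ_w is differentiable with nonzero derivative. -/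
open MeasureTheory Set Filter Topology

/-- `f` vanishes in infinite order at the origin. -/
def VanishesInfiniteOrder (f : ℝ → ℝ) : Prop :=
  ∃ C : ℝ, 0 < C ∧ ∃ r : ℕ → ℝ, (∀ m, 0 < r m) ∧
    Tendsto r atTop (nhds 0) ∧ ∀ m : ℕ, f (r m) ≤ C * (r m) ^ m

/-
If the ratios `w r / (r w'(r))` over the points where `φ` has a nonzero derivative were bounded
below by `c > 0`, then at every such point `φ = w` (where `φ < w` the running infimum is locally
constant to the right) and `w' = φ'`, so `φ' ≤ φ / (c r)` wherever `φ'` is nonzero. Since `φ` is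
Lipschitz, it is the integral of its derivative, which yields `φ b ≤ 2 φ a` whenever
`a ≤ b ≤ (1 + c / 2) a`. Iterating gives a polynomial lower bound `φ r ≳ r ^ p`, and `w ≥ φ`
cannot then vanish to infinite order.
-/

lemma LipschitzOnWith.image_sub_le_mul_sub_of_deriv_le {f : ℝ → ℝ} {K : NNReal} {a b B : ℝ}
    (hf : LipschitzOnWith K f (Icc a b)) (hab : a ≤ b) (hB : ∀ x ∈ Ioo a b, deriv f x ≤ B) :
    f b - f a ≤ B * (b - a) := by
  have hac : AbsolutelyContinuousOnInterval f a b :=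
    LipschitzOnWith.absolutelyContinuousOnInterval (by rwa [uIcc_of_le hab])
  calc f b - f a = ∫ x in a..b, deriv f x := hac.integral_deriv_eq_sub.symm
    _ ≤ ∫ _ in a..b, B := intervalIntegral.integral_mono_on_of_le_Ioo hab
        hac.intervalIntegrable_deriv intervalIntegrable_const hB
    _ = B * (b - a) := by simp [mul_comm]

lemma HasDerivAt.eq_zero_of_eqOn_Icc {f : ℝ → ℝ} {d x s : ℝ} (hf : HasDerivAt f d x)
    (hxs : x < s) (hconst : EqOn f (fun _ => f x) (Icc x s)) : d = 0 :=
  UniqueDiffWithinAt.eq_deriv _ (uniqueDiffOn_Icc hxs x (left_mem_Icc.2 hxs.le))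
    hf.hasDerivWithinAt ((hasDerivWithinAt_const x _ (f x)).congr hconst rfl)

lemma HasDerivAt.eq_of_eventuallyLE_of_eq {f g : ℝ → ℝ} {f' g' x : ℝ} (hf : HasDerivAt f f' x)
    (hg : HasDerivAt g g' x) (hle : f ≤ᶠ[𝓝 x] g) (heq : f x = g x) : f' = g' := by
  have hmin : IsLocalMin (fun y => g y - f y) x := by
    filter_upwards [hle] with y hy
    rw [heq, sub_self]
    exact sub_nonneg.2 hy
  linarith [hmin.hasDerivAt_eq_zero (hg.sub hf)]

section RunningInfimum

variable {w φ : ℝ → ℝ} {η c : ℝ}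

lemma runningInf_self (hφ : ∀ t, 0 < t → φ t = sInf (w '' Icc t η)) (hη : 0 < η) :
    φ η = w η := by
  rw [hφ η hη, Icc_self, image_singleton, csInf_singleton]

variable (hw : ∀ t, 0 < t → 0 ≤ w t) (hφ : ∀ t, 0 < t → φ t = sInf (w '' Icc t η))
include hw hφ

lemma runningInf_le_s12 {t u : ℝ} (ht : 0 < t) (htu : t ≤ u) (hu : u ≤ η) : φ t ≤ w u := by
  rw [hφ t ht]
  exact csInf_le ⟨0, by rintro _ ⟨s, hs, rfl⟩; exact hw s (ht.trans_le hs.1)⟩ ⟨u, ⟨htu, hu⟩, rfl⟩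

lemma runningInf_nonneg_s12 {t : ℝ} (ht : 0 < t) (htη : t ≤ η) : 0 ≤ φ t := by
  rw [hφ t ht]
  exact le_csInf ⟨w t, t, ⟨le_rfl, htη⟩, rfl⟩ fun _ ⟨s, hs, hs'⟩ => hs' ▸ hw s (ht.trans_le hs.1)

lemma runningInf_mono {s t : ℝ} (hs : 0 < s) (hst : s ≤ t) (ht : t ≤ η) : φ s ≤ φ t := by
  rw [hφ t (hs.trans_le hst)]
  exact le_csInf ⟨w t, t, ⟨le_rfl, ht⟩, rfl⟩ fun _ ⟨u, hu, hu'⟩ =>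
    hu' ▸ runningInf_le_s12 hw hφ hs (hst.trans hu.1) hu.2

lemma lipschitzOnWith_runningInf_s12 {K : NNReal} (hwK : LipschitzOnWith K w (Ioi 0)) :
    LipschitzOnWith K φ (Ioc 0 η) := by
  refine LipschitzOnWith.of_le_add_mul K fun x hx y hy => ?_
  suffices ∀ u ∈ Icc y η, φ x ≤ w u + K * dist x y by
    rw [hφ y hy.1, ← sub_le_iff_le_add]
    exact le_csInf ⟨w y, y, ⟨le_rfl, hy.2⟩, rfl⟩ fun _ ⟨u, hu, hu'⟩ =>
      hu' ▸ sub_le_iff_le_add.2 (this u hu)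
  intro u hu
  rcases le_total x u with hxu | hux
  · linarith [runningInf_le_s12 hw hφ hx.1 hxu hu.2, show 0 ≤ K * dist x y by positivity]
  · have hwxu := hwK.dist_le_mul x hx.1 u (hy.1.trans_le hu.1)
    have hdist : dist x u ≤ dist x y := by
      rw [Real.dist_eq, Real.dist_eq, abs_of_nonneg (sub_nonneg.2 hux),
        abs_of_nonneg (sub_nonneg.2 (hu.1.trans hux))]
      linarith [hu.1]
    have : w x - w u ≤ dist (w x) (w u) := (le_abs_self _).trans_eq (Real.dist_eq _ _).symm
    nlinarith [runningInf_le_s12 hw hφ hx.1 le_rfl hx.2, K.2]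

lemma runningInf_eq_of_hasDerivAt (hwc : ContinuousOn w (Ioi 0)) {x d : ℝ}
    (hx : x ∈ Ioo 0 η) (hd : d ≠ 0) (hφd : HasDerivAt φ d x) : φ x = w x := by
  obtain ⟨s, hs, hmin⟩ := isCompact_Icc.exists_isMinOn (nonempty_Icc.2 hx.2.le)
    (hwc.mono fun y hy => hx.1.trans_le hy.1)
  have hφs : φ x = w s := by
    rw [hφ x hx.1]
    exact IsLeast.csInf_eq ⟨mem_image_of_mem w hs, forall_mem_image.2 hmin⟩
  rcases hs.1.eq_or_lt with rfl | hxs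
  · exact hφs
  refine absurd (hφd.eq_zero_of_eqOn_Icc hxs fun t ht => ?_) hd
  exact le_antisymm (hφs ▸ runningInf_le_s12 hw hφ (hx.1.trans_le ht.1) ht.2 hs.2)
    (runningInf_mono hw hφ hx.1 ht.1 (ht.2.trans hs.2))

variable (hc : 0 < c)
  (hratio : ∀ x ∈ Ioo 0 η, ∀ d ≠ 0, HasDerivAt φ d x → c ≤ |w x / (x * deriv w x)|)
include hc hratio

lemma deriv_runningInf_le (hwc : ContinuousOn w (Ioi 0)) {x : ℝ} (hx : x ∈ Ioo 0 η) :
    deriv φ x ≤ φ x / (c * x) := by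
  have hx0 := hx.1
  rcases le_or_gt (deriv φ x) 0 with hd | hd
  · exact hd.trans (div_nonneg (runningInf_nonneg_s12 hw hφ hx.1 hx.2.le) (by positivity))
  have hφd : HasDerivAt φ (deriv φ x) x := (differentiableAt_of_deriv_ne_zero hd.ne').hasDerivAt
  have hcx := hratio x hx _ hd.ne' hφd
  have hwd : deriv w x ≠ 0 := by
    intro h
    rw [h, mul_zero, div_zero, abs_zero] at hcx
    linarith
  have hφw := runningInf_eq_of_hasDerivAt hw hφ hwc hx hd.ne' hφd
  have hder : deriv φ x = deriv w x :=
    hφd.eq_of_eventuallyLE_of_eq (differentiableAt_of_deriv_ne_zero hwd).hasDerivAt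
      (eventually_of_mem (Ioo_mem_nhds hx.1 hx.2) fun y hy =>
        runningInf_le_s12 hw hφ hy.1 le_rfl hy.2.le) hφw
  rw [← hder, abs_of_nonneg (div_nonneg (hw x hx.1) (by positivity)), le_div_iff₀ (by positivity)]
    at hcx
  rw [le_div_iff₀ (by positivity), hφw]
  linarith

lemma runningInf_le_two_mul {K : NNReal} (hwK : LipschitzOnWith K w (Ioi 0)) {a b : ℝ}
    (ha : 0 < a) (hab : a ≤ b) (hbη : b ≤ η) (hba : b ≤ (1 + c / 2) * a) : φ b ≤ 2 * φ a := by
  have hφb := runningInf_nonneg_s12 hw hφ (ha.trans_le hab) hbη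
  have hderiv : ∀ x ∈ Ioo a b, deriv φ x ≤ φ b / (c * a) := fun x hx =>
    (deriv_runningInf_le hw hφ hc hratio hwK.continuousOn
      ⟨ha.trans hx.1, hx.2.trans_le hbη⟩).trans <|
      div_le_div₀ hφb (runningInf_mono hw hφ (ha.trans hx.1) hx.2.le hbη) (by positivity)
        (mul_le_mul_of_nonneg_left hx.1.le hc.le)
  have hsub := ((lipschitzOnWith_runningInf_s12 hw hφ hwK).mono
    (Icc_subset_Ioc ha hbη)).image_sub_le_mul_sub_of_deriv_le hab hderiv
  have hhalf : φ b / (c * a) * (b - a) ≤ φ b / 2 := by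
    calc φ b / (c * a) * (b - a) ≤ φ b / (c * a) * (c * a / 2) :=
          mul_le_mul_of_nonneg_left (by linarith) (by positivity)
      _ = φ b / 2 := by field_simp
  linarith

end RunningInfimum

lemma exists_mul_pow_le_of_le_two_mul {g : ℝ → ℝ} {η q : ℝ} (hq : 1 < q)
    (hg : ∀ r ∈ Ioc 0 η, 0 ≤ g r)
    (hdouble : ∀ a b, 0 < a → a ≤ b → b ≤ η → b ≤ q * a → g b ≤ 2 * g a) :
    ∃ p : ℕ, ∀ r ∈ Ioc 0 η, g η * r ^ p ≤ 2 * η ^ p * g r := by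
  obtain ⟨p, hp⟩ := pow_unbounded_of_one_lt 2 hq
  refine ⟨p, fun r hr => ?_⟩
  obtain ⟨n, hn⟩ := pow_unbounded_of_one_lt (η / r) hq
  rw [div_lt_iff₀ hr.1] at hn
  induction n generalizing r with
  | zero =>
    obtain rfl : r = η := le_antisymm hr.2 (by simpa using hn.le)
    nlinarith [hg r hr, pow_nonneg hr.1.le p]
  | succ n ih =>
    have hgr := hg r hr
    rcases le_or_gt (q * r) η with hqr | hqr
    · have hqr0 : 0 < q * r := by nlinarith [hr.1]
      have ih' := ih (q * r) ⟨hqr0, hqr⟩ (by rw [pow_succ] at hn; linarith)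
      have hdbl := hdouble r (q * r) hr.1 (by nlinarith [hr.1]) hqr le_rfl
      have hgη := hg η ⟨hr.1.trans_le hr.2, le_rfl⟩
      rw [mul_pow] at ih'
      have hle : g η * (2 * r ^ p) ≤ g η * (q ^ p * r ^ p) :=
        mul_le_mul_of_nonneg_left (mul_le_mul_of_nonneg_right hp.le (pow_nonneg hr.1.le p)) hgη
      have hη2 : 2 * η ^ p * g (q * r) ≤ 2 * η ^ p * (2 * g r) :=
        mul_le_mul_of_nonneg_left hdbl (by have := hr.1.trans_le hr.2; positivity)
      linarith
    · have hdbl := hdouble r η hr.1 hr.2 le_rfl hqr.le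
      have hrp : r ^ p ≤ η ^ p := pow_le_pow_left₀ hr.1.le hr.2 p
      nlinarith [pow_nonneg hr.1.le p]

lemma VanishesInfiniteOrder.not_forall_mul_pow_le {f : ℝ → ℝ} (hf : VanishesInfiniteOrder f)
    {κ η : ℝ} (hκ : 0 < κ) (hη : 0 < η) (p : ℕ) : ¬ ∀ r ∈ Ioc 0 η, κ * r ^ p ≤ f r := by
  intro h
  obtain ⟨C, hC, ρ, hρpos, hρ0, hρ⟩ := hf
  obtain ⟨j, hjsmall, hjp⟩ := ((hρ0.eventually (gt_mem_nhds
    (show 0 < min η (min 1 (κ / C)) by positivity))).and (eventually_ge_atTop (p + 1))).exists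
  have hr := hρpos j
  simp only [lt_min_iff] at hjsmall
  obtain ⟨hrη, hr1, hrκ⟩ := hjsmall
  rw [lt_div_iff₀ hC] at hrκ
  have hrp : 0 < ρ j ^ p := pow_pos hr p
  have := pow_le_pow_of_le_one hr.le hr1.le hjp
  refine lt_irrefl _ <| calc κ * ρ j ^ p ≤ f (ρ j) := h (ρ j) ⟨hr, hrη.le⟩
    _ ≤ C * ρ j ^ j := hρ j
    _ ≤ C * ρ j ^ (p + 1) := by gcongr
    _ = (ρ j * C) * ρ j ^ p := by ring
    _ < κ * ρ j ^ p := by gcongr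

theorem stmt12_general
    (w : ℝ → ℝ) (hwpos : ∀ t : ℝ, 0 < t → 0 < w t)
    (hwlip : ∃ K : NNReal, LipschitzOnWith K w (Set.Ioi 0))
    (hvan : VanishesInfiniteOrder w) :
    ∀ η : ℝ, 0 < η → ∀ φ : ℝ → ℝ,
      (∀ t : ℝ, φ t = sInf (w '' {s : ℝ | t ≤ s ∧ 0 < s ∧ s ≤ η})) →
      sInf {k : ℝ | ∃ r : ℝ, 0 < r ∧ r ≤ η ∧
        (∃ d : ℝ, d ≠ 0 ∧ HasDerivAt φ d r) ∧
        k = |w r / (r * deriv w r)|} = 0 := by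
  intro η hη φ hφ
  obtain ⟨K, hwK⟩ := hwlip
  have hw : ∀ t, 0 < t → 0 ≤ w t := fun t ht => (hwpos t ht).le
  have hφ' : ∀ t, 0 < t → φ t = sInf (w '' Icc t η) := fun t ht => by
    rw [hφ t]
    congr 2
    ext s
    exact ⟨fun h => ⟨h.1, h.2.2⟩, fun h => ⟨h.1, ht.trans_le h.1, h.2⟩⟩
  set S := {k : ℝ | ∃ r : ℝ, 0 < r ∧ r ≤ η ∧ (∃ d : ℝ, d ≠ 0 ∧ HasDerivAt φ d r) ∧
    k = |w r / (r * deriv w r)|}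
  have hS : ∀ k ∈ S, 0 ≤ k := by
    rintro _ ⟨r, -, -, -, rfl⟩
    exact abs_nonneg _
  by_contra hS0
  have hc : 0 < sInf S := (Real.sInf_nonneg hS).lt_of_ne' hS0
  have hratio : ∀ x ∈ Ioo 0 η, ∀ d ≠ 0, HasDerivAt φ d x → sInf S ≤ |w x / (x * deriv w x)| :=
    fun x hx d hd hφd => csInf_le ⟨0, hS⟩ ⟨x, hx.1, hx.2.le, ⟨d, hd, hφd⟩, rfl⟩
  obtain ⟨p, hp⟩ := exists_mul_pow_le_of_le_two_mul (q := 1 + sInf S / 2) (by linarith)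
    (fun r hr => runningInf_nonneg_s12 hw hφ' hr.1 hr.2)
    (fun a b ha hab hbη hba => runningInf_le_two_mul hw hφ' hc hratio hwK ha hab hbη hba)
  refine hvan.not_forall_mul_pow_le (κ := w η / (2 * η ^ p)) (by have := hwpos η hη; positivity)
    hη p fun r hr => ?_
  rw [div_mul_eq_mul_div, div_le_iff₀ (by positivity), ← runningInf_self hφ' hη, mul_comm (w r)]
  exact (hp r hr).trans (mul_le_mul_of_nonneg_left (runningInf_le_s12 hw hφ' hr.1 le_rfl hr.2)
    (by positivity))

theorem stmt12
    (w : ℝ → ℝ) (hwpos : ∀ t : ℝ, 0 < t → 0 < w t)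
    (hwlip : ∃ K : NNReal, LipschitzOnWith K w (Set.Ioi 0))
    (hw0 : Tendsto w (nhdsWithin 0 (Set.Ioi 0)) (nhds 0))
    (hvan : VanishesInfiniteOrder w) :
    ∀ η : ℝ, 0 < η → ∀ φ : ℝ → ℝ,
      (∀ t : ℝ, φ t = sInf (w '' {s : ℝ | t ≤ s ∧ 0 < s ∧ s ≤ η})) →
      sInf {k : ℝ | ∃ r : ℝ, 0 < r ∧ r ≤ η ∧
        (∃ d : ℝ, d ≠ 0 ∧ HasDerivAt φ d r) ∧
        k = |w r / (r * deriv w r)|} = 0 :=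
  stmt12_general w hwpos hwlip hvan
end

section
/- Let 0 < η ≤ ∞, 1 ≤ q < ∞, and let w : (0,∞) → (0,∞) be locally Lipschitz, nondecreasing, with lim_{t→0+} w(t) = 0. Then for every compactly supported C¹ function u on (0,η): ∫₀^η |u'(t)| w(t) dt ≥ ( ∫₀^η |u(t)|^q |(w(t)^q)'| dt )^{1/q}, where (w^q)' is the a.e. derivative. -/
open MeasureTheory Set Filter Topology
open scoped ENNReal

/-!
Work on an interval `[a, b] ⊆ (0, ∞)` whose interior contains the support of `u`. Put
`V t = ∫ₜᵇ |u'|`, so that `|u| ≤ V`, and `W = w ^ q`. Integrating by parts against the absolutely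
continuous primitive of `W'`, which stays below `W - W a` because `W` is monotone, gives
`∫ V ^ q W' ≤ ∫ q V ^ (q - 1) |u'| W`. Monotonicity of `w` also gives
`V t * w t ≤ B t := ∫ₜᵇ |u'| w`, so the last integrand is at most
`q B ^ (q - 1) |u'| w = -(B ^ q)'`, whose integral is `B a ^ q`.
-/

theorem continuousOn_integral_left {f : ℝ → ℝ} {a b : ℝ} (hab : a ≤ b)
    (hf : ContinuousOn f (Icc a b)) : ContinuousOn (fun t => ∫ s in t..b, f s) (Icc a b) := by
  rw [← uIcc_of_le hab] at hf ⊢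
  exact intervalIntegral.continuousOn_primitive_interval_left
    (hf.integrableOn_compact isCompact_uIcc)

theorem hasDerivAt_rpow_integral_left {φ : ℝ → ℝ} {b q : ℝ} (hφ : Continuous φ)
    (hq : 1 ≤ q) (t : ℝ) :
    HasDerivAt (fun t => (∫ s in t..b, φ s) ^ q)
      (-(q * (∫ s in t..b, φ s) ^ (q - 1) * φ t)) t :=
  ((intervalIntegral.integral_hasDerivAt_left (hφ.intervalIntegrable _ _)
      hφ.aestronglyMeasurable.stronglyMeasurableAtFilter hφ.continuousAt).rpow_const
    (Or.inr hq)).congr_deriv (by ring)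

theorem integral_mul_deriv_le_of_monotoneOn {F W : ℝ → ℝ} {a b : ℝ} (hab : a ≤ b)
    (hF : ContDiff ℝ 1 F) (hFb : F b = 0) (hF' : ∀ t ∈ Icc a b, deriv F t ≤ 0)
    (hW : MonotoneOn W (Icc a b)) (hWc : ContinuousOn W (Icc a b)) :
    ∫ t in a..b, F t * deriv W t ≤ ∫ t in a..b, -deriv F t * (W t - W a) := by
  rw [← uIcc_of_le hab] at hW hWc
  have hW' : IntervalIntegrable (deriv W) volume a b := hW.intervalIntegrable_deriv
  set G : ℝ → ℝ := fun t => ∫ s in a..t, deriv W s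
  have hG : AbsolutelyContinuousOnInterval G a b :=
    hW'.absolutelyContinuousOnInterval_intervalIntegral left_mem_uIcc
  have hGa : G a = 0 := intervalIntegral.integral_same
  have hG_le : ∀ t ∈ Icc a b, G t ≤ W t - W a := fun t ht => by
    have h :=
      (hW.mono (uIcc_subset_uIcc_left (Icc_subset_uIcc ht))).intervalIntegral_deriv_mem_uIcc
    rw [uIcc_of_le (sub_nonneg.2 (hW left_mem_uIcc (Icc_subset_uIcc ht) ht.1))] at h
    exact h.2
  have hderiv : ∫ t in a..b, F t * deriv W t = ∫ t in a..b, F t * deriv G t := by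
    refine intervalIntegral.integral_congr_ae ?_
    filter_upwards [hW'.ae_hasDerivAt_integral] with t ht ht'
    rw [(ht (uIoc_subset_uIcc ht') a left_mem_uIcc).deriv]
  have hF'c : ContinuousOn (deriv F) (uIcc a b) := (hF.continuous_deriv le_rfl).continuousOn
  rw [hderiv, hF.contDiffOn.absolutelyContinuousOnInterval.integral_mul_deriv_eq_deriv_mul hG,
    hFb, hGa, zero_mul, mul_zero, sub_zero, zero_sub, ← intervalIntegral.integral_neg]
  refine intervalIntegral.integral_mono_on hab ?_ ?_ fun t ht => ?_
  · exact (hF'c.mul hG.continuousOn).neg.intervalIntegrable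
  · exact (hF'c.neg.mul (hWc.sub continuousOn_const)).intervalIntegrable
  · rw [← neg_mul]
    exact mul_le_mul_of_nonneg_left (hG_le t ht) (neg_nonneg.2 (hF' t ht))

theorem integral_mul_le_integral_mul_of_monotoneOn {φ ω : ℝ → ℝ} {t b : ℝ} (htb : t ≤ b)
    (hφ : ContinuousOn φ (Icc t b)) (hφ0 : ∀ s ∈ Icc t b, 0 ≤ φ s)
    (hω : MonotoneOn ω (Icc t b)) (hωc : ContinuousOn ω (Icc t b)) :
    (∫ s in t..b, φ s) * ω t ≤ ∫ s in t..b, φ s * ω s := by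
  rw [← intervalIntegral.integral_mul_const]
  exact intervalIntegral.integral_mono_on htb
    ((hφ.mul continuousOn_const).intervalIntegrable_of_Icc htb)
    ((hφ.mul hωc).intervalIntegrable_of_Icc htb) fun s hs =>
      mul_le_mul_of_nonneg_left (hω ⟨le_rfl, htb⟩ hs hs.1) (hφ0 s hs)

theorem integral_mul_rpow_integral_eq_rpow_integral {f : ℝ → ℝ} {a b q : ℝ} (hab : a ≤ b)
    (hq : 1 ≤ q) (hf : ContinuousOn f (Icc a b)) :
    ∫ t in a..b, q * (∫ s in t..b, f s) ^ (q - 1) * f t = (∫ t in a..b, f t) ^ q := by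
  set B : ℝ → ℝ := fun t => ∫ s in t..b, f s
  have hBc : ContinuousOn B (Icc a b) := continuousOn_integral_left hab hf
  have hB : ∀ t ∈ Ioo a b, HasDerivAt B (-f t) t := fun t ht =>
    intervalIntegral.integral_hasDerivAt_left
      ((hf.mono (Icc_subset_Icc ht.1.le le_rfl)).intervalIntegrable_of_Icc ht.2.le)
      ((hf.mono Ioo_subset_Icc_self).stronglyMeasurableAtFilter isOpen_Ioo t ht)
      (hf.continuousAt (Icc_mem_nhds ht.1 ht.2))
  have hBq : ∀ t ∈ Ioo a b, HasDerivAt (fun t => -B t ^ q) (q * B t ^ (q - 1) * f t) t :=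
    fun t ht => ((hB t ht).rpow_const (Or.inr hq)).neg.congr_deriv (by ring)
  have hftc := intervalIntegral.integral_eq_sub_of_hasDerivAt_of_le hab
    (hBc.rpow_const fun _ _ => Or.inr (by linarith)).neg hBq
    ((continuousOn_const.mul (hBc.rpow_const fun _ _ => Or.inr (by linarith))).mul hf
      |>.intervalIntegrable_of_Icc hab)
  simpa [B, Real.zero_rpow (by linarith : q ≠ 0)] using hftc

theorem mul_rpow_sub_one_mul_mul_rpow_le {q v w φ β : ℝ} (hq : 1 ≤ q) (hv : 0 ≤ v)
    (hw : 0 ≤ w) (hφ : 0 ≤ φ) (hvw : v * w ≤ β) :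
    q * v ^ (q - 1) * φ * w ^ q ≤ q * β ^ (q - 1) * (φ * w) := by
  have hwq : w ^ q = w ^ (q - 1) * w := by
    rw [← Real.rpow_add_one' hw (by linarith), sub_add_cancel]
  calc q * v ^ (q - 1) * φ * w ^ q = q * (v * w) ^ (q - 1) * (φ * w) := by
        rw [Real.mul_rpow hv hw, hwq]
        ring
    _ ≤ q * β ^ (q - 1) * (φ * w) := by gcongr

theorem integral_rpow_integral_mul_deriv_le_of_monotoneOn {φ W : ℝ → ℝ} {a b q : ℝ}
    (hab : a ≤ b) (hq : 1 ≤ q) (hφ : Continuous φ) (hφ0 : ∀ t ∈ Icc a b, 0 ≤ φ t)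
    (hW : MonotoneOn W (Icc a b)) (hWc : ContinuousOn W (Icc a b)) :
    ∫ t in a..b, (∫ s in t..b, φ s) ^ q * deriv W t ≤
      ∫ t in a..b, q * (∫ s in t..b, φ s) ^ (q - 1) * φ t * (W t - W a) := by
  set V : ℝ → ℝ := fun t => ∫ s in t..b, φ s
  have hV : Continuous V :=
    (intervalIntegral.continuous_primitive (fun _ _ => hφ.intervalIntegrable _ _) b).neg.congr
      fun t => (intervalIntegral.integral_symm b t).symm
  have hVq := hasDerivAt_rpow_integral_left (b := b) hφ hq
  have hVq_deriv : deriv (fun t => V t ^ q) = fun t => -(q * V t ^ (q - 1) * φ t) :=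
    funext fun t => (hVq t).deriv
  have hVq_cont : Continuous fun t => -(q * V t ^ (q - 1) * φ t) :=
    ((continuous_const.mul (hV.rpow_const fun _ => Or.inr (by linarith))).mul hφ).neg
  have hVq_nonpos : ∀ t ∈ Icc a b, -(q * V t ^ (q - 1) * φ t) ≤ 0 := fun t ht =>
    have hVt : 0 ≤ V t :=
      intervalIntegral.integral_nonneg ht.2 fun s hs => hφ0 s ⟨ht.1.trans hs.1, hs.2⟩
    neg_nonpos.2 (mul_nonneg (mul_nonneg (by linarith) (Real.rpow_nonneg hVt _)) (hφ0 t ht))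
  have hVq_diff : ContDiff ℝ 1 fun t => V t ^ q :=
    contDiff_one_iff_deriv.2 ⟨fun t => (hVq t).differentiableAt, hVq_deriv ▸ hVq_cont⟩
  simpa only [hVq_deriv, neg_neg] using integral_mul_deriv_le_of_monotoneOn hab hVq_diff
    (by simp [V, Real.zero_rpow (by linarith : q ≠ 0)]) (hVq_deriv ▸ hVq_nonpos) hW hWc

theorem integral_rpow_integral_mul_deriv_rpow_le {φ ω : ℝ → ℝ} {a b q : ℝ} (hab : a ≤ b)
    (hq : 1 ≤ q) (hφ : Continuous φ) (hφ0 : ∀ t ∈ Icc a b, 0 ≤ φ t)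
    (hω : MonotoneOn ω (Icc a b)) (hωc : ContinuousOn ω (Icc a b)) (hω0 : 0 ≤ ω a) :
    ∫ t in a..b, (∫ s in t..b, φ s) ^ q * deriv (fun s => ω s ^ q) t ≤
      (∫ t in a..b, φ t * ω t) ^ q := by
  set V : ℝ → ℝ := fun t => ∫ s in t..b, φ s
  set B : ℝ → ℝ := fun t => ∫ s in t..b, φ s * ω s
  have hωt : ∀ t ∈ Icc a b, 0 ≤ ω t := fun t ht => hω0.trans (hω ⟨le_rfl, hab⟩ ht ht.1)
  have hWc : ContinuousOn (fun s => ω s ^ q) (Icc a b) :=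
    hωc.rpow_const fun _ _ => Or.inr (by linarith)
  have hVc : ContinuousOn V (Icc a b) := continuousOn_integral_left hab hφ.continuousOn
  have hBc : ContinuousOn B (Icc a b) :=
    continuousOn_integral_left hab (hφ.continuousOn.mul hωc)
  calc ∫ t in a..b, V t ^ q * deriv (fun s => ω s ^ q) t
      ≤ ∫ t in a..b, q * V t ^ (q - 1) * φ t * (ω t ^ q - ω a ^ q) :=
        integral_rpow_integral_mul_deriv_le_of_monotoneOn hab hq hφ hφ0
          ((Real.monotoneOn_rpow_Ici_of_exponent_nonneg (by linarith)).comp hω hωt) hWc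
    _ ≤ ∫ t in a..b, q * B t ^ (q - 1) * (φ t * ω t) := by
        refine intervalIntegral.integral_mono_on hab
          (((continuousOn_const.mul (hVc.rpow_const fun _ _ => Or.inr (by linarith))).mul
            hφ.continuousOn).mul (hWc.sub continuousOn_const) |>.intervalIntegrable_of_Icc hab)
          (((continuousOn_const.mul (hBc.rpow_const fun _ _ => Or.inr (by linarith))).mul
            (hφ.continuousOn.mul hωc)).intervalIntegrable_of_Icc hab) fun t ht => ?_
        have hVt : 0 ≤ V t :=
          intervalIntegral.integral_nonneg ht.2 fun s hs => hφ0 s ⟨ht.1.trans hs.1, hs.2⟩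
        have hVω : V t * ω t ≤ B t :=
          integral_mul_le_integral_mul_of_monotoneOn ht.2 hφ.continuousOn
            (fun s hs => hφ0 s ⟨ht.1.trans hs.1, hs.2⟩) (hω.mono (Icc_subset_Icc_left ht.1))
            (hωc.mono (Icc_subset_Icc_left ht.1))
        have hφt := hφ0 t ht
        calc q * V t ^ (q - 1) * φ t * (ω t ^ q - ω a ^ q)
            ≤ q * V t ^ (q - 1) * φ t * ω t ^ q := by
              gcongr
              exact sub_le_self _ (Real.rpow_nonneg hω0 _)
          _ ≤ q * B t ^ (q - 1) * (φ t * ω t) :=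
              mul_rpow_sub_one_mul_mul_rpow_le hq hVt (hωt t ht) hφt hVω
    _ = (∫ t in a..b, φ t * ω t) ^ q :=
        integral_mul_rpow_integral_eq_rpow_integral hab hq (hφ.continuousOn.mul hωc)

theorem abs_le_integral_abs_deriv_of_eq_zero {u : ℝ → ℝ} {t b : ℝ} (hu : ContDiff ℝ 1 u)
    (hub : u b = 0) (htb : t ≤ b) : |u t| ≤ ∫ s in t..b, |deriv u s| := by
  have hftc := intervalIntegral.integral_deriv_eq_sub
    (fun x _ => (hu.differentiable one_ne_zero) x)
    ((hu.continuous_deriv le_rfl).intervalIntegrable t b)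
  rw [hub, zero_sub] at hftc
  calc |u t| = |∫ s in t..b, deriv u s| := by rw [hftc, abs_neg]
    _ ≤ ∫ s in t..b, |deriv u s| := intervalIntegral.abs_integral_le_integral_abs htb

theorem integral_abs_rpow_mul_abs_deriv_rpow_le {u ω : ℝ → ℝ} {a b q : ℝ} (hab : a ≤ b)
    (hq : 1 ≤ q) (hu : ContDiff ℝ 1 u) (hub : u b = 0) (hω : MonotoneOn ω (Icc a b))
    (hωc : ContinuousOn ω (Icc a b)) (hω0 : 0 ≤ ω a) :
    ∫ t in a..b, |u t| ^ q * |deriv (fun s => ω s ^ q) t| ≤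
      (∫ t in a..b, |deriv u t| * ω t) ^ q := by
  have hu' : Continuous fun t => |deriv u t| := (hu.continuous_deriv le_rfl).abs
  have hW : MonotoneOn (fun s => ω s ^ q) (Icc a b) :=
    (Real.monotoneOn_rpow_Ici_of_exponent_nonneg (by linarith)).comp hω
      fun t ht => hω0.trans (hω ⟨le_rfl, hab⟩ ht ht.1)
  have hW' : IntervalIntegrable (deriv fun s => ω s ^ q) volume a b :=
    (uIcc_of_le hab ▸ hW).intervalIntegrable_deriv
  refine le_trans ?_ (integral_rpow_integral_mul_deriv_rpow_le hab hq hu'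
    (fun _ _ => abs_nonneg _) hω hωc hω0)
  refine intervalIntegral.integral_mono_on_of_le_Ioo hab
    (hW'.abs.continuousOn_mul
      (hu.continuous.abs.rpow_const fun _ => Or.inr (by linarith)).continuousOn)
    (hW'.continuousOn_mul ?_) fun t ht => ?_
  · rw [uIcc_of_le hab]
    exact (continuousOn_integral_left hab hu'.continuousOn).rpow_const
      fun _ _ => Or.inr (by linarith)
  have hW't : 0 ≤ deriv (fun s => ω s ^ q) t := by
    rw [← derivWithin_of_mem_nhds (Icc_mem_nhds ht.1 ht.2)]
    exact hW.derivWithin_nonneg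
  rw [abs_of_nonneg hW't]
  gcongr
  exact abs_le_integral_abs_deriv_of_eq_zero hu hub ht.2.le

theorem IsCompact.exists_Ioo_superset_of_subset_Ioi {K : Set ℝ} (hK : IsCompact K)
    (hK0 : K ⊆ Ioi 0) : ∃ a b, 0 < a ∧ a < b ∧ K ⊆ Ioo a b := by
  rcases K.eq_empty_or_nonempty with rfl | hne
  · exact ⟨1, 2, one_pos, one_lt_two, empty_subset _⟩
  have h0 : 0 < sInf K := hK0 (hK.sInf_mem hne)
  refine ⟨sInf K / 2, sSup K + 1, half_pos h0, ?_, fun t ht => ⟨?_, ?_⟩⟩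
  · obtain ⟨x, hx⟩ := hne
    linarith [csInf_le hK.bddBelow hx, le_csSup hK.bddAbove hx]
  · linarith [csInf_le hK.bddBelow ht]
  · linarith [le_csSup hK.bddAbove ht]

theorem setIntegral_eq_intervalIntegral_of_support_subset {f : ℝ → ℝ} {s : Set ℝ}
    {a b : ℝ} (hab : a ≤ b) (hs : Function.support f ⊆ s)
    (hf : Function.support f ⊆ Ioc a b) :
    ∫ t in s, f t = ∫ t in a..b, f t := by
  rw [intervalIntegral.integral_of_le hab,
    setIntegral_eq_integral_of_forall_compl_eq_zero (Function.support_subset_iff'.1 hs),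
    setIntegral_eq_integral_of_forall_compl_eq_zero (Function.support_subset_iff'.1 hf)]

theorem stmt17_general (η : ℝ≥0∞) (q : ℝ) (hq : 1 ≤ q)
    (w : ℝ → ℝ) (hwpos : ∀ t : ℝ, 0 < t → 0 < w t)
    (hwlip : ∀ a b : ℝ, 0 < a → ∃ K : NNReal, LipschitzOnWith K w (Set.Icc a b))
    (hwmono : MonotoneOn w (Set.Ioi 0))
    (u : ℝ → ℝ) (hu : ContDiff ℝ 1 u) (husupp : HasCompactSupport u)
    (husub : tsupport u ⊆ {t : ℝ | 0 < t ∧ ENNReal.ofReal t < η}) :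
    ∫ t in {t : ℝ | 0 < t ∧ ENNReal.ofReal t < η}, |deriv u t| * w t ≥
      (∫ t in {t : ℝ | 0 < t ∧ ENNReal.ofReal t < η},
        |u t| ^ q * |deriv (fun s => w s ^ q) t|) ^ (1 / q) := by
  obtain ⟨a, b, ha, hab, hsupp⟩ :=
    IsCompact.exists_Ioo_superset_of_subset_Ioi husupp fun t ht => (husub ht).1
  have hsupp' : tsupport u ⊆ Ioc a b := hsupp.trans Ioo_subset_Ioc_self
  have hu0 : ∀ t ∉ tsupport u, u t = 0 := fun t => image_eq_zero_of_notMem_tsupport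
  have hu'0 : ∀ t ∉ tsupport u, deriv u t = 0 := fun t ht =>
    Function.notMem_support.1 fun h => ht (support_deriv_subset h)
  have hsupp_left : Function.support (fun t => |deriv u t| * w t) ⊆ tsupport u :=
    Function.support_subset_iff'.2 fun t ht => by simp [hu'0 t ht]
  have hsupp_right :
      Function.support (fun t => |u t| ^ q * |deriv (fun s => w s ^ q) t|) ⊆ tsupport u :=
    Function.support_subset_iff'.2 fun t ht => by
      simp [hu0 t ht, Real.zero_rpow (by linarith : q ≠ 0)]
  obtain ⟨K, hK⟩ := hwlip a b ha
  rw [setIntegral_eq_intervalIntegral_of_support_subset hab.le (hsupp_left.trans husub)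
      (hsupp_left.trans hsupp'),
    setIntegral_eq_intervalIntegral_of_support_subset hab.le (hsupp_right.trans husub)
      (hsupp_right.trans hsupp'),
    ge_iff_le, one_div, Real.rpow_inv_le_iff_of_pos
      (intervalIntegral.integral_nonneg hab.le fun t _ => by positivity)
      (intervalIntegral.integral_nonneg hab.le fun t ht =>
        mul_nonneg (abs_nonneg _) (hwpos t (ha.trans_le ht.1)).le) (by linarith)]
  exact integral_abs_rpow_mul_abs_deriv_rpow_le hab.le hq hu
    (hu0 b fun h => (hsupp h).2.false) (hwmono.mono fun t ht => ha.trans_le ht.1)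
    hK.continuousOn (hwpos a ha).le

theorem stmt17 (η : ℝ≥0∞) (hη : 0 < η) (q : ℝ) (hq : 1 ≤ q)
    (w : ℝ → ℝ) (hwpos : ∀ t : ℝ, 0 < t → 0 < w t)
    (hwlip : ∀ a b : ℝ, 0 < a → ∃ K : NNReal, LipschitzOnWith K w (Set.Icc a b))
    (hwmono : MonotoneOn w (Set.Ioi 0))
    (hw0 : Tendsto w (nhdsWithin 0 (Set.Ioi 0)) (nhds 0))
    (u : ℝ → ℝ) (hu : ContDiff ℝ 1 u) (husupp : HasCompactSupport u)
    (husub : tsupport u ⊆ {t : ℝ | 0 < t ∧ ENNReal.ofReal t < η}) :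
    ∫ t in {t : ℝ | 0 < t ∧ ENNReal.ofReal t < η}, |deriv u t| * w t ≥
      (∫ t in {t : ℝ | 0 < t ∧ ENNReal.ofReal t < η},
        |u t| ^ q * |deriv (fun s => w s ^ q) t|) ^ (1 / q) :=
  stmt17_general η q hq w hwpos hwlip hwmono u hu husupp husub
end
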